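/- arXiv:math/0311385 — 9 statements merged into one kernel-verified Lean document; each statement's English description precedes it below -/
import Mathlib

section
/- Let G be an abelian group and g₁,…,gₙ ∈ G a B_h-sequence, i.e. all sums g_{i₁}+⋯+g_{i_h} with 1 ≤ i₁ ≤ ⋯ ≤ i_h ≤ n are distinct. Define φ : 𝔽₂ⁿ → G by φ(x₁,…,xₙ) = x₁g₁ + ⋯ + xₙgₙ (identifying 𝔽₂ with {0,1} ⊂ ℤ). Then for every integer w and every g ∈ G, the set φ⁻¹(g) ∩ {x ∈ 𝔽₂ⁿ : wt(x) = w} is a binary code of constant weight w with minimum Hamming distance at least 2h+2. -/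
/-- `g : Fin n → G` is a `B_h`-sequence: all sums of `h` terms with
nondecreasing indices are distinct. -/
def IsBhSeq {G : Type*} [AddCommGroup G] (h : ℕ) {n : ℕ} (g : Fin n → G) : Prop :=
  ∀ s t : Fin h → Fin n, Monotone s → Monotone t →
    (∑ i, g (s i)) = (∑ i, g (t i)) → s = t

section Aux

variable {n : ℕ}

/-- The multiset of `A` padded with copies of `a` up to size `h`, sorted. -/
def padList (h : ℕ) (A : Finset (Fin n)) (a : Fin n) : List (Fin n) :=
  (A.val + Multiset.replicate (h - A.card) a).sort (· ≤ ·)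

lemma padList_length {h : ℕ} {A : Finset (Fin n)} {a : Fin n} (hk : A.card ≤ h) :
    (padList h A a).length = h := by
  simp only [padList, Multiset.length_sort, Multiset.card_add, Multiset.card_replicate]
  show A.card + (h - A.card) = h
  omega

lemma padList_sorted (h : ℕ) (A : Finset (Fin n)) (a : Fin n) :
    (padList h A a).Pairwise (· ≤ ·) := Multiset.pairwise_sort _ _

lemma padList_coe (h : ℕ) (A : Finset (Fin n)) (a : Fin n) :
    ((padList h A a : List (Fin n)) : Multiset (Fin n))
      = A.val + Multiset.replicate (h - A.card) a :=
  Multiset.sort_eq _ _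

lemma padList_sum {G : Type*} [AddCommGroup G] (g : Fin n → G)
    (h : ℕ) (A : Finset (Fin n)) (a : Fin n) :
    ((padList h A a).map g).sum = (∑ i ∈ A, g i) + (h - A.card) • g a := by
  calc ((padList h A a).map g).sum
      = (((padList h A a : List (Fin n)) : Multiset (Fin n)).map g).sum := rfl
    _ = ((A.val + Multiset.replicate (h - A.card) a).map g).sum := by
        rw [padList_coe]
    _ = (A.val.map g).sum + ((Multiset.replicate (h - A.card) a).map g).sum := by
        rw [Multiset.map_add, Multiset.sum_add]
    _ = (∑ i ∈ A, g i) + (h - A.card) • g a := by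
        rw [Multiset.map_replicate, Multiset.sum_replicate]
        rfl

lemma sum_get_eq_map_sum {G : Type*} [AddCommGroup G] (g : Fin n → G)
    (L : List (Fin n)) :
    (∑ i : Fin L.length, g (L.get i)) = (L.map g).sum := by
  rw [← List.ofFn_getElem_eq_map L g, List.sum_ofFn]
  rfl

end Aux

theorem stmt0 {G : Type*} [AddCommGroup G] (n h : ℕ) (g : Fin n → G)
    (hg : IsBhSeq h g) (w : ℕ) (g₀ : G) :
    ∀ x y : Fin n → ZMod 2,
      (∑ i, (x i).val • g i) = g₀ → (∑ i, (y i).val • g i) = g₀ →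
      hammingNorm x = w → hammingNorm y = w →
      x ≠ y → 2 * h + 2 ≤ hammingDist x y := by
  classical
  intro x y hx hy hwx hwy hne
  by_contra hlt
  push_neg at hlt
  have two_cases : ∀ a : ZMod 2, a = 0 ∨ a = 1 := by decide
  set Sx : Finset (Fin n) := Finset.univ.filter (fun i => x i ≠ 0) with hSx
  set Sy : Finset (Fin n) := Finset.univ.filter (fun i => y i ≠ 0) with hSy
  set A : Finset (Fin n) := Sx \ Sy with hA
  set B : Finset (Fin n) := Sy \ Sx with hB
  -- membership characterizations
  have memSx : ∀ i, i ∈ Sx ↔ x i = 1 := by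
    intro i
    simp only [hSx, Finset.mem_filter, Finset.mem_univ, true_and]
    rcases two_cases (x i) with h0 | h0 <;> simp [h0]
  have memSy : ∀ i, i ∈ Sy ↔ y i = 1 := by
    intro i
    simp only [hSy, Finset.mem_filter, Finset.mem_univ, true_and]
    rcases two_cases (y i) with h0 | h0 <;> simp [h0]
  -- Hamming distance = |A| + |B|
  have hdist : hammingDist x y = A.card + B.card := by
    have hAB : Disjoint A B := by
      rw [hA, hB]
      exact disjoint_sdiff_sdiff
    rw [← Finset.card_union_of_disjoint hAB]
    have : Finset.univ.filter (fun i => x i ≠ y i) = A ∪ B := by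
      ext i
      simp only [Finset.mem_filter, Finset.mem_univ, true_and, Finset.mem_union,
        hA, hB, Finset.mem_sdiff, memSx, memSy]
      rcases two_cases (x i) with h0 | h0 <;> rcases two_cases (y i) with k0 | k0 <;>
        simp [h0, k0]
    rw [hammingDist, ← this]
  -- weights
  have hcardSx : Sx.card = w := hwx
  have hcardSy : Sy.card = w := hwy
  have hABcard : A.card = B.card := by
    have h1 : A.card + (Sx ∩ Sy).card = Sx.card := by
      rw [hA, Finset.card_sdiff_add_card_inter]
    have h2 : B.card + (Sy ∩ Sx).card = Sy.card := by
      rw [hB, Finset.card_sdiff_add_card_inter]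
    rw [Finset.inter_comm] at h2
    omega
  set k := A.card with hk
  have hkh : k ≤ h := by omega
  -- A nonempty
  have hAne : A.Nonempty := by
    rw [Finset.nonempty_iff_ne_empty]
    intro hemp
    have hA0 : A.card = 0 := by simp [hemp]
    have hBemp : B = ∅ := Finset.card_eq_zero.mp (by omega)
    apply hne
    have hSxy : Sx = Sy := by
      have h1 : Sx ⊆ Sy := by
        intro i hi
        by_contra hni
        have : i ∈ A := Finset.mem_sdiff.mpr ⟨hi, hni⟩
        simp [hemp] at this
      have h2 : Sy ⊆ Sx := by
        intro i hi
        by_contra hni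
        have : i ∈ B := Finset.mem_sdiff.mpr ⟨hi, hni⟩
        simp [hBemp] at this
      exact Finset.Subset.antisymm h1 h2
    funext i
    have hx1 : x i = 1 ↔ y i = 1 := by rw [← memSx, ← memSy, hSxy]
    rcases two_cases (x i) with h0 | h0 <;> rcases two_cases (y i) with k0 | k0
    · rw [h0, k0]
    · exact absurd (hx1.mpr k0) (by rw [h0]; decide)
    · exact absurd (hx1.mp h0) (by rw [k0]; decide)
    · rw [h0, k0]
  obtain ⟨a₀, ha₀⟩ := hAne
  -- sums over supports are equal
  have hsupp : ∀ z : Fin n → ZMod 2,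
      (∑ i, (z i).val • g i) = ∑ i ∈ Finset.univ.filter (fun i => z i ≠ 0), g i := by
    intro z
    rw [Finset.sum_filter]
    apply Finset.sum_congr rfl
    intro i _
    rcases two_cases (z i) with h0 | h0
    · simp [h0]
    · rw [h0]
      show (1 : ZMod 2).val • g i = g i
      rw [show (1 : ZMod 2).val = 1 from rfl, one_smul]
  have hSxSy : (∑ i ∈ Sx, g i) = ∑ i ∈ Sy, g i := by
    rw [← hsupp x, ← hsupp y, hx, hy]
  -- sums over A and B are equal
  have hABsum : (∑ i ∈ A, g i) = ∑ i ∈ B, g i := by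
    have h1 : (∑ i ∈ A, g i) + (∑ i ∈ Sx ∩ Sy, g i) = ∑ i ∈ Sx, g i := by
      rw [hA, ← Finset.sdiff_inter_self_left Sx Sy]
      exact Finset.sum_sdiff (Finset.inter_subset_left)
    have h2 : (∑ i ∈ B, g i) + (∑ i ∈ Sx ∩ Sy, g i) = ∑ i ∈ Sy, g i := by
      rw [hB, Finset.inter_comm, ← Finset.sdiff_inter_self_left Sy Sx]
      exact Finset.sum_sdiff (Finset.inter_subset_left)
    rw [hSxSy] at h1
    rw [← h2] at h1
    exact add_right_cancel h1
  -- build monotone sequences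
  have hlenA : (padList h A a₀).length = h := padList_length hkh
  have hlenB : (padList h B a₀).length = h := padList_length (by omega)
  set s : Fin h → Fin n := fun i => (padList h A a₀).get (Fin.cast hlenA.symm i) with hs
  set t : Fin h → Fin n := fun i => (padList h B a₀).get (Fin.cast hlenB.symm i) with ht
  have hmons : Monotone s := by
    intro i j hij
    exact (padList_sorted h A a₀).rel_get_of_le (by simpa using hij)
  have hmont : Monotone t := by
    intro i j hij
    exact (padList_sorted h B a₀).rel_get_of_le (by simpa using hij)
  have hsumeq : (∑ i, g (s i)) = ∑ i, g (t i) := by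
    have e1 : (∑ i, g (s i)) = ∑ i : Fin (padList h A a₀).length, g ((padList h A a₀).get i) :=
      Fintype.sum_equiv (finCongr hlenA.symm) _ _ (fun i => rfl)
    have e2 : (∑ i, g (t i)) = ∑ i : Fin (padList h B a₀).length, g ((padList h B a₀).get i) :=
      Fintype.sum_equiv (finCongr hlenB.symm) _ _ (fun i => rfl)
    rw [e1, e2, sum_get_eq_map_sum, sum_get_eq_map_sum, padList_sum, padList_sum, hABsum]
    have hcc : A.card = B.card := hABcard
    rw [hcc]
  have hst : s = t := hg s t hmons hmont hsumeq
  -- derive A = B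
  have hlists : padList h A a₀ = padList h B a₀ := by
    apply List.ext_get (by rw [hlenA, hlenB])
    intro i hi hi'
    have := congrFun hst ⟨i, by omega⟩
    simpa [hs, ht] using this
  have hmult : A.val + Multiset.replicate (h - A.card) a₀
      = B.val + Multiset.replicate (h - B.card) a₀ := by
    rw [← padList_coe h A a₀, ← padList_coe h B a₀, hlists]
  rw [← hABcard] at hmult
  have hval : A.val = B.val := add_right_cancel hmult
  have hABeq : A = B := Finset.val_inj.mp hval
  -- contradiction
  have ha₀' : a₀ ∈ B := hABeq ▸ ha₀
  rw [hA, Finset.mem_sdiff] at ha₀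
  rw [hB, Finset.mem_sdiff] at ha₀'
  exact ha₀'.2 ha₀.1
end

section
/- Suppose x, y ∈ 𝔽₂ⁿ have equal Hamming weight w, satisfy x₁g₁+⋯+xₙgₙ = y₁g₁+⋯+yₙgₙ in an abelian group G where g₁,…,gₙ is a B_h-sequence, and the Hamming distance δ(x,y) < 2h+2. Then x = y. -/
private lemma sum_get_map {G : Type*} [AddCommGroup G] {n : ℕ} (g : Fin n → G)
    (l : List (Fin n)) : (∑ j : Fin l.length, g (l.get j)) = (l.map g).sum := by
  conv_rhs => rw [← List.ofFn_get l, List.map_ofFn, List.sum_ofFn]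
  rfl

private lemma bh_multiset {G : Type*} [AddCommGroup G] {h n : ℕ} {g : Fin n → G}
    (hg : IsBhSeq h g) {s t : Multiset (Fin n)}
    (hs : Multiset.card s = h) (ht : Multiset.card t = h)
    (hsum : (s.map g).sum = (t.map g).sum) : s = t := by
  set ls := s.sort (· ≤ ·) with hls
  set lt := t.sort (· ≤ ·) with hlt
  have hlens : ls.length = h := by rw [hls, Multiset.length_sort]; exact hs
  have hlent : lt.length = h := by rw [hlt, Multiset.length_sort]; exact ht
  set f : Fin h → Fin n := fun i => ls.get (Fin.cast hlens.symm i) with hf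
  set f' : Fin h → Fin n := fun i => lt.get (Fin.cast hlent.symm i) with hf'
  have hmono : Monotone f := fun i j hij =>
    (Multiset.pairwise_sort s _).rel_get_of_le hij
  have hmono' : Monotone f' := fun i j hij =>
    (Multiset.pairwise_sort t _).rel_get_of_le hij
  have hsumf : (∑ i, g (f i)) = ∑ i, g (f' i) := by
    have e1 : (∑ i, g (f i)) = ∑ j : Fin ls.length, g (ls.get j) :=
      Fintype.sum_equiv (finCongr hlens.symm) _ _ (fun i => rfl)
    have e2 : (∑ i, g (f' i)) = ∑ j : Fin lt.length, g (lt.get j) :=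
      Fintype.sum_equiv (finCongr hlent.symm) _ _ (fun i => rfl)
    rw [e1, e2, sum_get_map, sum_get_map]
    have hsum' := hsum
    rw [← Multiset.sort_eq s (· ≤ ·), ← Multiset.sort_eq t (· ≤ ·)] at hsum'
    simpa [Multiset.map_coe, Multiset.sum_coe, ← hls, ← hlt] using hsum'
  have hff : f = f' := hg f f' hmono hmono' hsumf
  have hlist : ls = lt := by
    apply List.ext_get (by rw [hlens, hlent])
    intro i h1 h2
    exact congrFun hff ⟨i, hlens ▸ h1⟩
  calc s = ↑ls := (Multiset.sort_eq s _).symm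
  _ = ↑lt := by rw [hlist]
  _ = t := Multiset.sort_eq t _

theorem stmt1 {G : Type*} [AddCommGroup G] (n h w : ℕ) (g : Fin n → G)
    (hg : IsBhSeq h g) (x y : Fin n → ZMod 2)
    (hwx : hammingNorm x = w) (hwy : hammingNorm y = w)
    (hsum : (∑ i, (x i).val • g i) = ∑ i, (y i).val • g i)
    (hdist : hammingDist x y < 2 * h + 2) :
    x = y := by
  classical
  rcases Nat.eq_zero_or_pos n with rfl | hn
  · funext i; exact i.elim0
  set i₀ : Fin n := ⟨0, hn⟩
  have two : ∀ a : ZMod 2, a = 0 ∨ a = 1 := by decide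
  set A : Finset (Fin n) := Finset.univ.filter (fun i => x i ≠ 0 ∧ y i = 0) with hA
  set B : Finset (Fin n) := Finset.univ.filter (fun i => y i ≠ 0 ∧ x i = 0) with hB
  set C : Finset (Fin n) := Finset.univ.filter (fun i => x i ≠ 0 ∧ y i ≠ 0) with hC
  -- set decompositions
  have hXA : Finset.univ.filter (fun i => x i ≠ 0) = A ∪ C := by
    ext i; simp only [hA, hC, Finset.mem_filter, Finset.mem_union, Finset.mem_univ, true_and]
    tauto
  have hYB : Finset.univ.filter (fun i => y i ≠ 0) = B ∪ C := by
    ext i; simp only [hB, hC, Finset.mem_filter, Finset.mem_union, Finset.mem_univ, true_and]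
    tauto
  have hD : Finset.univ.filter (fun i => x i ≠ y i) = A ∪ B := by
    ext i; simp only [hA, hB, Finset.mem_filter, Finset.mem_union, Finset.mem_univ, true_and]
    rcases two (x i) with hx | hx <;> rcases two (y i) with hy | hy <;>
      rw [hx, hy] <;> decide
  have dAC : Disjoint A C := by
    rw [Finset.disjoint_left]; intro i hiA hiC
    simp only [hA, hC, Finset.mem_filter] at hiA hiC
    exact hiC.2.2 hiA.2.2
  have dBC : Disjoint B C := by
    rw [Finset.disjoint_left]; intro i hiB hiC
    simp only [hB, hC, Finset.mem_filter] at hiB hiC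
    exact hiC.2.1 hiB.2.2
  have dAB : Disjoint A B := by
    rw [Finset.disjoint_left]; intro i hiA hiB
    simp only [hA, hB, Finset.mem_filter] at hiA hiB
    exact hiA.2.1 hiB.2.2
  -- cardinalities
  have hcardX : A.card + C.card = w := by
    rw [← Finset.card_union_of_disjoint dAC, ← hXA]
    exact hwx
  have hcardY : B.card + C.card = w := by
    rw [← Finset.card_union_of_disjoint dBC, ← hYB]
    exact hwy
  have hcardAB : A.card = B.card := by omega
  have hcardD : A.card + B.card < 2 * h + 2 := by
    rw [← Finset.card_union_of_disjoint dAB, ← hD]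
    exact hdist
  have hAle : A.card ≤ h := by omega
  -- sums over supports
  have key : ∀ z : Fin n → ZMod 2,
      (∑ i, (z i).val • g i) = ∑ i ∈ Finset.univ.filter (fun i => z i ≠ 0), g i := by
    intro z
    rw [← Finset.sum_filter_of_ne (p := fun i => z i ≠ 0) (by
      intro i _ hne h0
      apply hne; rw [h0]; simp)]
    apply Finset.sum_congr rfl
    intro i hi
    simp only [Finset.mem_filter] at hi
    rcases two (z i) with h0 | h1
    · exact absurd h0 hi.2
    · rw [h1]; simp [ZMod.val_one]
  have hsum2 : (∑ i ∈ A, g i) + ∑ i ∈ C, g i = (∑ i ∈ B, g i) + ∑ i ∈ C, g i := by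
    have := hsum
    rw [key x, key y, hXA, hYB, Finset.sum_union dAC, Finset.sum_union dBC] at this
    exact this
  have hsumAB : (∑ i ∈ A, g i) = ∑ i ∈ B, g i := add_right_cancel hsum2
  -- pass to multisets and apply B_h property
  set sA : Multiset (Fin n) := A.val + Multiset.replicate (h - A.card) i₀ with hsA
  set sB : Multiset (Fin n) := B.val + Multiset.replicate (h - A.card) i₀ with hsB
  have hcA : Multiset.card sA = h := by
    rw [hsA, Multiset.card_add, Multiset.card_replicate]
    have : Multiset.card A.val = A.card := rfl
    omega
  have hcB : Multiset.card sB = h := by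
    rw [hsB, Multiset.card_add, Multiset.card_replicate]
    have : Multiset.card B.val = B.card := rfl
    omega
  have hmsum : (sA.map g).sum = (sB.map g).sum := by
    rw [hsA, hsB, Multiset.map_add, Multiset.map_add, Multiset.sum_add, Multiset.sum_add,
      Multiset.map_replicate, Multiset.sum_replicate]
    have eA : (Multiset.map g A.val).sum = ∑ i ∈ A, g i := rfl
    have eB : (Multiset.map g B.val).sum = ∑ i ∈ B, g i := rfl
    rw [eA, eB, hsumAB]
  have hse : sA = sB := bh_multiset hg hcA hcB hmsum
  have hvalAB : A.val = B.val := by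
    rw [hsA, hsB] at hse
    exact add_right_cancel hse
  have hABeq : A = B := Finset.val_injective hvalAB
  have hAempty : A = ∅ := by
    have : Disjoint A A := hABeq ▸ dAB
    simpa using this
  have hBempty : B = ∅ := hABeq ▸ hAempty
  funext i
  by_contra hne
  have : i ∈ Finset.univ.filter (fun i => x i ≠ y i) := by
    simp [hne]
  rw [hD, hAempty, hBempty] at this
  simp at this
end

section
/- Let G be a finite abelian group of cardinality c containing a B_h-sequence g₁,…,gₙ. Then A(n, 2h+2, w) ≥ (1/c)·C(n,w), where A(n,d,w) is the maximal size of a binary code of length n, constant weight w, and minimum distance ≥ d. -/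
open Finset


/-- `A(n, d, w)`: maximal size of a binary code of length `n`, constant weight `w`
and minimum Hamming distance at least `d`. -/
noncomputable def Aw (n d w : ℕ) : ℕ :=
  sSup {m | ∃ C : Finset (Fin n → ZMod 2), C.card = m ∧
    (∀ x ∈ C, hammingNorm x = w) ∧
    ∀ x ∈ C, ∀ y ∈ C, x ≠ y → d ≤ hammingDist x y}

lemma sum_fin_emb {G : Type*} [AddCommGroup G] {k n : ℕ} (P : Finset (Fin n)) (hk : P.card = k)
    (f : Fin n → G) : ∑ j : Fin k, f (P.orderEmbOfFin hk j) = ∑ p ∈ P, f p := by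
  have himg : Finset.image (P.orderEmbOfFin hk) Finset.univ = P := by
    ext x
    simp only [Finset.mem_image, Finset.mem_univ, true_and]
    constructor
    · rintro ⟨j, rfl⟩; exact P.orderEmbOfFin_mem hk j
    · intro hx
      have : x ∈ Set.range (P.orderEmbOfFin hk) := by
        rw [P.range_orderEmbOfFin hk]; exact hx
      exact this
  have h2 := Finset.sum_image (f := f) (s := (Finset.univ : Finset (Fin k)))
    (g := fun j => (P.orderEmbOfFin hk) j)
    (fun a _ b _ hab => (P.orderEmbOfFin hk).injective hab)
  rw [himg] at h2
  exact h2.symm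

lemma bh_key {G : Type*} [AddCommGroup G] {h n : ℕ} {g : Fin n → G} (hg : IsBhSeq h g)
    {P Q : Finset (Fin n)} (hd : Disjoint P Q) (hPQ : P.card = Q.card) (hkh : P.card ≤ h)
    (hsum : (∑ i ∈ P, g i) = ∑ i ∈ Q, g i) : P = ∅ := by
  by_contra hne
  have hP : P.Nonempty := Finset.nonempty_iff_ne_empty.2 hne
  obtain ⟨i0, hi0⟩ := hP
  have hn : 0 < n := i0.pos
  have hkpos : 0 < P.card := Finset.card_pos.2 ⟨i0, hi0⟩
  set k := P.card with hkdef
  set L : Fin n := ⟨n - 1, by omega⟩ with hL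
  have hLtop : ∀ j : Fin n, j ≤ L := fun j => by
    simp only [Fin.le_def, hL]; omega
  set eP := P.orderEmbOfFin rfl with heP
  set eQ := Q.orderEmbOfFin hPQ.symm with heQ
  have hmono : ∀ (e : Fin k ↪o Fin n),
      Monotone (fun i : Fin h => if hi : (i : ℕ) < k then e ⟨i, hi⟩ else L) := by
    intro e i j hij
    have hij' : (i : ℕ) ≤ (j : ℕ) := hij
    dsimp only
    split_ifs with hi hj hj
    · exact e.monotone (show (⟨(i:ℕ), hi⟩ : Fin k) ≤ ⟨(j:ℕ), hj⟩ from hij')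
    · exact hLtop _
    · omega
    · exact le_refl L
  have hsplit : ∀ (e : Fin k ↪o Fin n),
      ∑ i : Fin h, g (if hi : (i : ℕ) < k then e ⟨i, hi⟩ else L)
        = (∑ j : Fin k, g (e j))
          + ∑ _i ∈ Finset.univ.filter (fun i : Fin h => ¬ (i : ℕ) < k), g L := by
    intro e
    rw [← Finset.sum_filter_add_sum_filter_not Finset.univ (fun i : Fin h => (i : ℕ) < k)]
    congr 1
    · refine Finset.sum_bij' (fun a ha => (⟨(a : ℕ), (Finset.mem_filter.1 ha).2⟩ : Fin k))
        (fun b _ => (⟨(b : ℕ), lt_of_lt_of_le b.isLt hkh⟩ : Fin h)) ?_ ?_ ?_ ?_ ?_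
      · intro a ha; exact Finset.mem_univ _
      · intro b _; exact Finset.mem_filter.2 ⟨Finset.mem_univ _, b.isLt⟩
      · intro a ha; ext; rfl
      · intro b _; ext; rfl
      · intro a ha
        rw [dif_pos (Finset.mem_filter.1 ha).2]
    · exact Finset.sum_congr rfl fun i hi => by
        rw [dif_neg (Finset.mem_filter.1 hi).2]
  set s : Fin h → Fin n := fun i => if hi : (i : ℕ) < k then eP ⟨i, hi⟩ else L with hs
  set t : Fin h → Fin n := fun i => if hi : (i : ℕ) < k then eQ ⟨i, hi⟩ else L with ht
  have hst : s = t := by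
    refine hg s t (hmono eP) (hmono eQ) ?_
    rw [hs, ht, hsplit eP, hsplit eQ, sum_fin_emb, sum_fin_emb, hsum]
  have h0 : (0 : ℕ) < h := lt_of_lt_of_le hkpos hkh
  have := congrFun hst ⟨0, h0⟩
  rw [hs, ht] at this
  simp only [dif_pos hkpos] at this
  have hmemP : eP ⟨0, hkpos⟩ ∈ P := P.orderEmbOfFin_mem rfl _
  have hmemQ : eQ ⟨0, hkpos⟩ ∈ Q := Q.orderEmbOfFin_mem hPQ.symm _
  rw [this] at hmemP
  exact Finset.disjoint_left.1 hd hmemP hmemQ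
lemma zmod2_ne_iff (a b : ZMod 2) :
    a ≠ b ↔ ((a ≠ 0 ∧ ¬b ≠ 0) ∨ (b ≠ 0 ∧ ¬a ≠ 0)) := by revert a b; decide

lemma zmod2_eq_of_iff {a b : ZMod 2} (hab : a ≠ 0 ↔ b ≠ 0) : a = b := by
  revert hab; revert a b; decide

theorem stmt3 {G : Type*} [AddCommGroup G] [Fintype G] (n h w c : ℕ)
    (hc : Fintype.card G = c) (g : Fin n → G) (hg : IsBhSeq h g) :
    (n.choose w : ℝ) / c ≤ Aw n (2 * h + 2) w := by
  classical
  set σ : (Fin n → ZMod 2) → G :=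
    fun x => ∑ i ∈ Finset.univ.filter (fun i => x i ≠ 0), g i with hσ
  set S : Finset (Fin n → ZMod 2) :=
    Finset.univ.filter (fun x => hammingNorm x = w) with hS
  -- Step A : n.choose w ≤ S.card
  have hchoose : n.choose w ≤ S.card := by
    have hps : ((Finset.univ : Finset (Fin n)).powersetCard w).card = n.choose w := by
      rw [Finset.card_powersetCard, Finset.card_univ, Fintype.card_fin]
    rw [← hps]
    apply Finset.card_le_card_of_injOn (fun A => fun i => if i ∈ A then (1 : ZMod 2) else 0)
    · intro A hA
      rw [Finset.mem_coe, Finset.mem_powersetCard] at hA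
      rw [Finset.mem_coe, hS, Finset.mem_filter]
      refine ⟨Finset.mem_univ _, ?_⟩
      rw [← hA.2]
      unfold hammingNorm
      congr 1
      ext i
      by_cases hi : i ∈ A <;> simp [hi]
    · intro A _ B _ hAB
      ext i
      have := congrFun hAB i
      by_cases hiA : i ∈ A <;> by_cases hiB : i ∈ B <;> simp_all
  -- distance property of fibers
  have hcode : ∀ b : G, ∀ x ∈ S.filter (fun x => σ x = b), ∀ y ∈ S.filter (fun x => σ x = b),
      x ≠ y → 2 * h + 2 ≤ hammingDist x y := by
    intro b x hx y hy hxy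
    rw [Finset.mem_filter, hS, Finset.mem_filter] at hx hy
    set A : Finset (Fin n) := Finset.univ.filter (fun i => x i ≠ 0) with hA
    set B : Finset (Fin n) := Finset.univ.filter (fun i => y i ≠ 0) with hB
    have hAc : A.card = w := hx.1.2
    have hBc : B.card = w := hy.1.2
    have hdist : hammingDist x y = (A \ B).card + (B \ A).card := by
      unfold hammingDist
      rw [← Finset.card_union_of_disjoint (disjoint_sdiff_sdiff)]
      congr 1
      ext i
      simp only [Finset.mem_filter, Finset.mem_univ, true_and, Finset.mem_union,
        Finset.mem_sdiff, hA, hB]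
      rw [zmod2_ne_iff]
    have hcards : (A \ B).card = (B \ A).card := by
      have h1 := Finset.card_sdiff_add_card_inter A B
      have h2 := Finset.card_sdiff_add_card_inter B A
      rw [Finset.inter_comm] at h2
      omega
    have hsums : (∑ i ∈ A \ B, g i) = ∑ i ∈ B \ A, g i := by
      have h1 := Finset.sum_inter_add_sum_sdiff A B g
      have h2 := Finset.sum_inter_add_sum_sdiff B A g
      rw [Finset.inter_comm] at h2
      have hσeq : (∑ i ∈ A, g i) = ∑ i ∈ B, g i := by
        have := hx.2.trans hy.2.symm
        exact this
      have := h1.trans (hσeq.trans h2.symm)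
      exact add_left_cancel this
    by_contra hlt
    push_neg at hlt
    have hkh : (A \ B).card ≤ h := by omega
    have hempty := bh_key hg disjoint_sdiff_sdiff hcards hkh hsums
    have hsub : A = B := by
      have hAB : A ⊆ B := by
        intro i hi
        by_contra hiB
        have : i ∈ A \ B := Finset.mem_sdiff.2 ⟨hi, hiB⟩
        rw [hempty] at this
        exact absurd this (Finset.notMem_empty i)
      exact Finset.eq_of_subset_of_card_le hAB (by omega)
    apply hxy
    funext i
    apply zmod2_eq_of_iff
    constructor
    · intro hxi
      have : i ∈ A := by rw [hA]; simp [hxi]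
      rw [hsub, hB] at this
      simpa using this
    · intro hyi
      have : i ∈ B := by rw [hB]; simp [hyi]
      rw [← hsub, hA] at this
      simpa using this
  -- each fiber card ≤ Aw
  have hbdd : BddAbove {m | ∃ C : Finset (Fin n → ZMod 2), C.card = m ∧
      (∀ x ∈ C, hammingNorm x = w) ∧
      ∀ x ∈ C, ∀ y ∈ C, x ≠ y → (2 * h + 2) ≤ hammingDist x y} := by
    refine ⟨Fintype.card (Fin n → ZMod 2), ?_⟩
    rintro m ⟨C, rfl, -, -⟩
    exact Finset.card_le_univ C
  have hfib : ∀ b : G, (S.filter (fun x => σ x = b)).card ≤ Aw n (2 * h + 2) w := by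
    intro b
    apply le_csSup hbdd
    refine ⟨S.filter (fun x => σ x = b), rfl, ?_, hcode b⟩
    intro x hx
    rw [Finset.mem_filter, hS, Finset.mem_filter] at hx
    exact hx.1.2
  -- sum of fibers
  have hsumfib : S.card = ∑ b : G, (S.filter (fun x => σ x = b)).card :=
    Finset.card_eq_sum_card_fiberwise (fun x _ => Finset.mem_univ (σ x))
  have hmain : n.choose w ≤ c * Aw n (2 * h + 2) w := by
    calc n.choose w ≤ S.card := hchoose
      _ = ∑ b : G, (S.filter (fun x => σ x = b)).card := hsumfib
      _ ≤ ∑ _b : G, Aw n (2 * h + 2) w := Finset.sum_le_sum (fun b _ => hfib b)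
      _ = c * Aw n (2 * h + 2) w := by
          rw [Finset.sum_const, Finset.card_univ, hc, smul_eq_mul]
  have hcpos : 0 < c := hc ▸ Fintype.card_pos
  rw [div_le_iff₀ (by exact_mod_cast hcpos)]
  calc (n.choose w : ℝ) ≤ (c * Aw n (2 * h + 2) w : ℕ) := by exact_mod_cast hmain
    _ = (Aw n (2 * h + 2) w : ℝ) * c := by push_cast; ring
end

section
/- Let q be a prime power, P(X) ∈ 𝔽_q[X] a polynomial of degree h, and a₁,…,aₙ ∈ 𝔽_q distinct elements with P(aᵢ) ≠ 0 for all i. Then the sequence (X−a₁), (X−a₂), …, (X−aₙ) is a B_h-sequence in the multiplicative group of units of the ring 𝔽_q[X]/(P(X)). -/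
/-- `g : Fin n → G` (multiplicative) is a `B_h`-sequence: all products of `h`
terms with nondecreasing indices are distinct. -/
def IsMulBhSeq {G : Type*} [CommGroup G] (h : ℕ) {n : ℕ} (g : Fin n → G) : Prop :=
  ∀ s t : Fin h → Fin n, Monotone s → Monotone t →
    (∏ i, g (s i)) = (∏ i, g (t i)) → s = t

theorem stmt4 {F : Type*} [Field F] [Fintype F] (h n : ℕ)
    (P : Polynomial F) (hP : P.degree = h)
    (a : Fin n → F) (ha : Function.Injective a)
    (hroot : ∀ i, P.eval (a i) ≠ 0)
    (u : Fin n → (Polynomial F ⧸ Ideal.span {P})ˣ)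
    (hu : ∀ i, (u i : Polynomial F ⧸ Ideal.span {P}) =
      Ideal.Quotient.mk (Ideal.span {P}) (Polynomial.X - Polynomial.C (a i))) :
    IsMulBhSeq h u := by
  classical
  intro s t hs ht heq
  set A : Polynomial F := ∏ i, (Polynomial.X - Polynomial.C (a (s i))) with hA
  set B : Polynomial F := ∏ i, (Polynomial.X - Polynomial.C (a (t i))) with hB
  have hAm : A.Monic := Polynomial.monic_prod_of_monic _ _ fun i _ =>
    Polynomial.monic_X_sub_C _
  have hBm : B.Monic := Polynomial.monic_prod_of_monic _ _ fun i _ =>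
    Polynomial.monic_X_sub_C _
  have hdeg : ∀ g : Fin h → Fin n,
      (∏ i : Fin h, (Polynomial.X - Polynomial.C (a (g i)))).degree = (h : WithBot ℕ) := by
    intro g
    rw [Polynomial.degree_prod]
    simp [Polynomial.degree_X_sub_C]
  -- quotient equality gives P ∣ A - B
  have hq : (Ideal.Quotient.mk (Ideal.span {P})) A = (Ideal.Quotient.mk (Ideal.span {P})) B := by
    have := congrArg (Units.coeHom (Polynomial F ⧸ Ideal.span {P})) heq
    simpa [hA, hB, map_prod, hu] using this
  have hdvd : P ∣ A - B := by
    rw [← Ideal.mem_span_singleton, ← Ideal.Quotient.eq_zero_iff_mem, map_sub, hq, sub_self]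
  have hAB : A = B := by
    have hlt : (A - B).degree < P.degree := by
      rw [hP]
      calc (A - B).degree < A.degree := by
            apply Polynomial.degree_sub_lt
            · rw [hA, hB, hdeg s, hdeg t]
            · exact hAm.ne_zero
            · rw [hAm.leadingCoeff, hBm.leadingCoeff]
        _ = (h : WithBot ℕ) := by rw [hA, hdeg s]
    exact sub_eq_zero.mp (Polynomial.eq_zero_of_dvd_of_degree_lt hdvd hlt)
  -- unique factorization: roots of A and B
  have hroots : ∀ f : Fin h → F,
      (∏ i : Fin h, (Polynomial.X - Polynomial.C (f i))).roots
        = Multiset.map f Finset.univ.val := by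
    intro f
    have := Polynomial.roots_multiset_prod_X_sub_C (Multiset.map f Finset.univ.val)
    rw [← this, Multiset.map_map]
    rw [Finset.prod_eq_multiset_prod]
    rfl
  have hms : Multiset.map (a ∘ s) Finset.univ.val = Multiset.map (a ∘ t) Finset.univ.val := by
    have h1 := hroots (a ∘ s)
    have h2 := hroots (a ∘ t)
    rw [← h1, ← h2]
    exact congrArg Polynomial.roots hAB
  have hms' : Multiset.map s Finset.univ.val = Multiset.map t Finset.univ.val := by
    apply Multiset.map_injective ha
    rw [Multiset.map_map, Multiset.map_map]
    exact hms
  have hperm : (List.ofFn s).Perm (List.ofFn t) := by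
    rw [← Multiset.coe_eq_coe, ← Fin.univ_val_map, ← Fin.univ_val_map]
    exact hms'
  exact List.ofFn_injective (List.Perm.eq_of_sortedLE
    (List.sortedLE_ofFn_iff.mpr hs) (List.sortedLE_ofFn_iff.mpr ht) hperm)
end

section
/- Let q be a prime power, P(X) ∈ 𝔽_q[X] a polynomial of degree h+1, and a₁,…,aₙ ∈ 𝔽_q distinct elements with P(aᵢ) ≠ 0 for all i. Then the images of 1, (X−a₁), …, (X−aₙ) in the quotient group (𝔽_q[X]/P(X))^× / 𝔽_q^× form a B_h-sequence of length n+1. -/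
open Polynomial

/-- The subgroup of constant units `𝔽_q^×` inside `(𝔽_q[X]/P)^×`. -/
noncomputable def constUnits {F : Type*} [Field F] (P : Polynomial F) :
    Subgroup (Polynomial F ⧸ Ideal.span {P})ˣ :=
  (Units.map ((Ideal.Quotient.mk (Ideal.span {P})).comp Polynomial.C).toMonoidHom).range

noncomputable instance quotCommGroup {F : Type*} [Field F] (P : Polynomial F)
    (H : Subgroup (Polynomial F ⧸ Ideal.span {P})ˣ) :
    CommGroup ((Polynomial F ⧸ Ideal.span {P})ˣ ⧸ H) :=
  QuotientGroup.Quotient.commGroup (G := (Polynomial F ⧸ Ideal.span {P})ˣ) H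

lemma mono_eq_of_multiset_eq {m k : ℕ} {s t : Fin m → Fin k} (hs : Monotone s) (ht : Monotone t)
    (hst : (List.ofFn s : Multiset (Fin k)) = (List.ofFn t : Multiset (Fin k))) : s = t :=
  List.ofFn_injective (List.Perm.eq_of_sortedLE hs.sortedLE_ofFn ht.sortedLE_ofFn
    (Multiset.coe_eq_coe.mp hst))

theorem stmt5 {F : Type*} [Field F] [Fintype F] (h n : ℕ)
    (P : Polynomial F) (hP : P.degree = h + 1)
    (a : Fin n → F) (ha : Function.Injective a)
    (hroot : ∀ i, P.eval (a i) ≠ 0)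
    (u : Fin n → (Polynomial F ⧸ Ideal.span {P})ˣ)
    (hu : ∀ i, (u i : Polynomial F ⧸ Ideal.span {P}) =
      Ideal.Quotient.mk (Ideal.span {P}) (Polynomial.X - Polynomial.C (a i))) :
    IsMulBhSeq h
      (Fin.cases
        ((QuotientGroup.mk 1 : (Polynomial F ⧸ Ideal.span {P})ˣ ⧸ constUnits P))
        (fun i => QuotientGroup.mk (u i)) :
        Fin (n + 1) → (Polynomial F ⧸ Ideal.span {P})ˣ ⧸ constUnits P) := by
  classical
  intro s t hs ht hprod
  set v : Fin (n + 1) → (Polynomial F ⧸ Ideal.span {P})ˣ := Fin.cases 1 u with hv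
  set Q : Fin (n + 1) → Polynomial F := Fin.cases 1 (fun i => X - C (a i)) with hQ
  have hvQ : ∀ j, ((v j : (Polynomial F ⧸ Ideal.span {P})ˣ) : Polynomial F ⧸ Ideal.span {P}) =
      Ideal.Quotient.mk (Ideal.span {P}) (Q j) := by
    intro j
    induction j using Fin.cases with
    | zero => simp [hv, hQ]
    | succ i => simp [hv, hQ, hu i, map_sub]
  have hg : ∀ j : Fin (n + 1),
      (Fin.cases (QuotientGroup.mk 1) (fun i => QuotientGroup.mk (u i)) :
        Fin (n + 1) → (Polynomial F ⧸ Ideal.span {P})ˣ ⧸ constUnits P) j =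
      QuotientGroup.mk (v j) := by
    intro j
    induction j using Fin.cases with
    | zero => simp [hv]
    | succ i => simp [hv]
  have hprod' : (QuotientGroup.mk (∏ i, v (s i)) :
        (Polynomial F ⧸ Ideal.span {P})ˣ ⧸ constUnits P) = QuotientGroup.mk (∏ i, v (t i)) := by
    rw [QuotientGroup.mk_prod, QuotientGroup.mk_prod]
    calc (∏ i, (QuotientGroup.mk (v (s i)) :
            (Polynomial F ⧸ Ideal.span {P})ˣ ⧸ constUnits P))
        = ∏ i, (Fin.cases (QuotientGroup.mk 1) (fun i => QuotientGroup.mk (u i)) :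
            Fin (n + 1) → (Polynomial F ⧸ Ideal.span {P})ˣ ⧸ constUnits P) (s i) :=
          Finset.prod_congr rfl fun i _ => (hg (s i)).symm
      _ = ∏ i, (Fin.cases (QuotientGroup.mk 1) (fun i => QuotientGroup.mk (u i)) :
            Fin (n + 1) → (Polynomial F ⧸ Ideal.span {P})ˣ ⧸ constUnits P) (t i) := hprod
      _ = ∏ i, (QuotientGroup.mk (v (t i)) :
            (Polynomial F ⧸ Ideal.span {P})ˣ ⧸ constUnits P) :=
          Finset.prod_congr rfl fun i _ => hg (t i)
  obtain ⟨c, hc⟩ := QuotientGroup.eq.mp hprod'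
  -- push down to the quotient ring
  have hring : Ideal.Quotient.mk (Ideal.span {P}) (∏ i, Q (t i)) =
      Ideal.Quotient.mk (Ideal.span {P}) (C (c : F) * ∏ i, Q (s i)) := by
    have h1 : (∏ i, v (t i)) = (∏ i, v (s i)) *
        Units.map ((Ideal.Quotient.mk (Ideal.span {P})).comp Polynomial.C).toMonoidHom c := by
      rw [hc]; group
    have h2 := congrArg (Units.coeHom (Polynomial F ⧸ Ideal.span {P})) h1
    simp only [Units.coeHom_apply, Units.val_mul, Units.coe_map,
      RingHom.toMonoidHom_eq_coe, MonoidHom.coe_coe, RingHom.coe_comp,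
      Function.comp_apply] at h2
    have h3 : ∀ w : Fin h → Fin (n + 1),
        ((∏ i, v (w i) : (Polynomial F ⧸ Ideal.span {P})ˣ) : Polynomial F ⧸ Ideal.span {P}) =
          Ideal.Quotient.mk (Ideal.span {P}) (∏ i, Q (w i)) := by
      intro w
      rw [map_prod (Ideal.Quotient.mk (Ideal.span {P})), Units.coe_prod]
      exact Finset.prod_congr rfl fun i _ => hvQ (w i)
    rw [h3 s, h3 t] at h2
    rw [h2, map_mul, mul_comm]
  have hQmonic : ∀ j, (Q j).Monic := by
    intro j
    induction j using Fin.cases with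
    | zero => simpa [hQ] using monic_one
    | succ i => simpa [hQ] using monic_X_sub_C (a i)
  have hQdeg : ∀ j, (Q j).natDegree ≤ 1 := by
    intro j
    induction j using Fin.cases with
    | zero => simp [hQ]
    | succ i => simp [hQ]
  have hMmonic : ∀ w : Fin h → Fin (n + 1), (∏ i, Q (w i)).Monic := fun w =>
    monic_prod_of_monic _ _ (fun i _ => hQmonic (w i))
  have hMdeg : ∀ w : Fin h → Fin (n + 1), (∏ i, Q (w i)).degree ≤ (h : WithBot ℕ) := by
    intro w
    refine le_trans (degree_le_natDegree) ?_
    have : (∏ i, Q (w i)).natDegree ≤ h := by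
      refine le_trans (natDegree_prod_le _ _) ?_
      calc ∑ i : Fin h, (Q (w i)).natDegree ≤ ∑ _i : Fin h, 1 :=
            Finset.sum_le_sum (fun i _ => hQdeg (w i))
        _ = h := by simp
    exact_mod_cast this
  have hc0 : (c : F) ≠ 0 := c.ne_zero
  -- lift equation from the quotient to polynomials
  have hdvd : P ∣ (∏ i, Q (t i)) - C (c : F) * ∏ i, Q (s i) := by
    rw [← Ideal.mem_span_singleton]
    exact Ideal.Quotient.eq.mp hring
  have hdeglt : ((∏ i, Q (t i)) - C (c : F) * ∏ i, Q (s i)).degree < P.degree := by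
    rw [hP]
    refine lt_of_le_of_lt (degree_sub_le _ _) ?_
    have h1 : (∏ i, Q (t i)).degree ≤ (h : WithBot ℕ) := hMdeg t
    have h2 : (C (c : F) * ∏ i, Q (s i)).degree ≤ (h : WithBot ℕ) := by
      rw [degree_C_mul hc0]; exact hMdeg s
    refine lt_of_le_of_lt (max_le h1 h2) ?_
    exact_mod_cast Nat.lt_succ_self h
  have hpoly : (∏ i, Q (t i)) = C (c : F) * ∏ i, Q (s i) :=
    sub_eq_zero.mp (Polynomial.eq_zero_of_dvd_of_degree_lt hdvd hdeglt)
  -- leading coefficients show c = 1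
  have hc1 : (c : F) = 1 := by
    have := congrArg leadingCoeff hpoly
    rwa [(hMmonic t).leadingCoeff, leadingCoeff_mul, leadingCoeff_C,
      (hMmonic s).leadingCoeff, mul_one, eq_comm] at this
  rw [hc1, map_one, one_mul] at hpoly
  -- compare roots
  have hMne : ∀ w : Fin h → Fin (n + 1), (∏ i, Q (w i)) ≠ 0 := fun w => (hMmonic w).ne_zero
  have hrootsQ : ∀ (j : Fin (n + 1)) (k : Fin n),
      (Q j).roots.count (a k) = if j = Fin.succ k then 1 else 0 := by
    intro j k
    induction j using Fin.cases with
    | zero =>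
      have h0 : (0 : Fin (n + 1)) ≠ Fin.succ k := (Fin.succ_ne_zero k).symm
      simp [hQ, roots_one, h0]
    | succ i =>
      have hr : (Q (Fin.succ i)).roots = {a i} := by simp [hQ, roots_X_sub_C]
      rw [hr, Multiset.count_singleton]
      by_cases hik : i = k
      · simp [hik]
      · have h1 : a k ≠ a i := fun hh => hik (ha hh).symm
        have h2 : Fin.succ i ≠ Fin.succ k := fun hh => hik (Fin.succ_injective _ hh)
        simp [h1, h2]
  have hcountsucc : ∀ (w : Fin h → Fin (n + 1)) (k : Fin n),
      ((List.ofFn w : Multiset (Fin (n + 1)))).count (Fin.succ k) =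
        (∏ i, Q (w i)).roots.count (a k) := by
    intro w k
    rw [roots_prod _ _ (hMne w), Multiset.count_bind, ← Fin.univ_val_map]
    rw [Multiset.count_map]
    have hcq : ∀ i : Fin h,
        (Q (w i)).roots.count (a k) = if Fin.succ k = w i then 1 else 0 := by
      intro i
      rw [hrootsQ (w i) k]
      simp [eq_comm]
    calc Multiset.card (Multiset.filter (fun i => Fin.succ k = w i) Finset.univ.val)
        = ∑ i : Fin h, if Fin.succ k = w i then 1 else 0 := by
          rw [Finset.sum_boole]
          simp [Finset.filter, Finset.card]
      _ = (Multiset.map (fun i => (Q (w i)).roots.count (a k)) Finset.univ.val).sum := by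
          rw [Finset.sum_congr rfl (fun i _ => (hcq i).symm)]
          rfl
  have hcard : ∀ w : Fin h → Fin (n + 1),
      Multiset.card (List.ofFn w : Multiset (Fin (n + 1))) = h := by
    intro w; simp
  have hcount : ∀ j : Fin (n + 1),
      ((List.ofFn s : Multiset (Fin (n + 1)))).count j =
      ((List.ofFn t : Multiset (Fin (n + 1)))).count j := by
    have hsucc : ∀ k : Fin n,
        ((List.ofFn s : Multiset (Fin (n + 1)))).count (Fin.succ k) =
        ((List.ofFn t : Multiset (Fin (n + 1)))).count (Fin.succ k) := by
      intro k
      rw [hcountsucc s k, hcountsucc t k, hpoly]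
    intro j
    induction j using Fin.cases with
    | succ k => exact hsucc k
    | zero =>
      have hsum : ∀ w : Fin h → Fin (n + 1),
          ∑ j : Fin (n + 1), ((List.ofFn w : Multiset (Fin (n + 1)))).count j = h := by
        intro w
        calc ∑ j : Fin (n + 1), ((List.ofFn w : Multiset (Fin (n + 1)))).count j
            = ∑ j ∈ (List.ofFn w : Multiset (Fin (n + 1))).toFinset,
                ((List.ofFn w : Multiset (Fin (n + 1)))).count j := by
              refine (Finset.sum_subset (Finset.subset_univ _) ?_).symm
              intro x _ hx
              exact Multiset.count_eq_zero.mpr (by simpa using hx)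
          _ = Multiset.card (List.ofFn w : Multiset (Fin (n + 1))) :=
              Multiset.toFinset_sum_count_eq _
          _ = h := hcard w
      have h1 := hsum s
      have h2 := hsum t
      rw [Fin.sum_univ_succ] at h1 h2
      have h3 : ∑ k : Fin n, ((List.ofFn s : Multiset (Fin (n + 1)))).count (Fin.succ k) =
          ∑ k : Fin n, ((List.ofFn t : Multiset (Fin (n + 1)))).count (Fin.succ k) :=
        Finset.sum_congr rfl fun k _ => hsucc k
      omega
  exact mono_eq_of_multiset_eq hs ht (Multiset.ext.mpr hcount)
end

section
/- Let q be a prime power, h ≥ 1, and S ⊆ 𝔽_q with #S = n, where q ≥ n + h. Then the minimum of μ(P(X)) := #(𝔽_q[X]/P(X))^× over polynomials P of degree h with P(s) ≠ 0 for all s ∈ S is (q−1)^h. -/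
/-- `μ(P)` is the number of units of `𝔽_q[X]/(P)`. -/
noncomputable def mu {F : Type*} [Field F] [Fintype F] (P : Polynomial F) : ℕ :=
  Nat.card (Polynomial F ⧸ Ideal.span {P})ˣ

open Polynomial

section Aux

variable {F : Type*} [Field F] [Fintype F]

lemma mu_unit (P : F[X]) (hP : IsUnit P) : mu P = 1 := by
  have : Ideal.span {P} = ⊤ := Ideal.span_singleton_eq_top.mpr hP
  haveI : Subsingleton (F[X] ⧸ Ideal.span {P}) := by
    rw [this]; exact Ideal.Quotient.subsingleton_iff.mpr rfl
  rw [mu, Nat.card_eq_one_iff_unique]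
  exact ⟨Unique.instSubsingleton, ⟨1⟩⟩

lemma mu_mul (A B : F[X]) (h : IsCoprime A B) : mu (A * B) = mu A * mu B := by
  have hsup : IsCoprime (Ideal.span {A}) (Ideal.span {B}) :=
    (Ideal.isCoprime_span_singleton_iff A B).mpr h
  have hspan : Ideal.span ({A * B} : Set F[X]) = Ideal.span {A} ⊓ Ideal.span {B} := by
    rw [← Ideal.span_singleton_mul_span_singleton]
    exact Ideal.mul_eq_inf_of_coprime hsup.sup_eq
  have e : (F[X] ⧸ Ideal.span {A * B}) ≃+*
      (F[X] ⧸ Ideal.span {A}) × (F[X] ⧸ Ideal.span {B}) :=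
    (Ideal.quotEquivOfEq hspan).trans
      (Ideal.quotientInfEquivQuotientProd _ _ hsup)
  rw [mu, Nat.card_congr ((Units.mapEquiv e.toMulEquiv).toEquiv.trans
    MulEquiv.prodUnits.toEquiv), Nat.card_prod]
  rfl

lemma finite_quot (P : F[X]) (hP : P ≠ 0) : Finite (F[X] ⧸ Ideal.span {P}) := by
  have b := AdjoinRoot.powerBasisAux hP
  exact Finite.of_equiv _ b.equivFun.toEquiv.symm

lemma card_quot (P : F[X]) (hP : P ≠ 0) :
    Nat.card (F[X] ⧸ Ideal.span {P}) = Fintype.card F ^ P.natDegree := by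
  have b := AdjoinRoot.powerBasisAux hP
  rw [show (F[X] ⧸ Ideal.span {P}) = AdjoinRoot P from rfl,
    Nat.card_congr b.equivFun.toEquiv, Nat.card_eq_fintype_card, Fintype.card_fun,
    Fintype.card_fin]

noncomputable def units_equiv_isUnit (M : Type*) [Monoid M] : Mˣ ≃ {x : M // IsUnit x} where
  toFun u := ⟨u, u.isUnit⟩
  invFun x := x.2.unit
  left_inv u := Units.ext (by simp)
  right_inv x := Subtype.ext x.2.unit_spec

lemma mu_pow (π : F[X]) (hπ : Irreducible π) (e : ℕ) (he : 1 ≤ e) :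
    mu (π ^ e) =
      Fintype.card F ^ (π.natDegree * e) - Fintype.card F ^ (π.natDegree * (e - 1)) := by
  have hπ0 : π ≠ 0 := hπ.ne_zero
  have hPe : (π ^ e) ≠ 0 := pow_ne_zero _ hπ0
  have hpe : π * π ^ (e - 1) = π ^ e := by
    rw [← pow_succ', Nat.sub_add_cancel he]
  set I : Ideal F[X] := Ideal.span {π ^ e} with hI
  haveI : Finite (F[X] ⧸ I) := finite_quot _ hPe
  haveI : Nontrivial (F[X] ⧸ I) := by
    apply Ideal.Quotient.nontrivial_iff.mpr
    rw [Ne, Ideal.span_singleton_eq_top]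
    exact fun hu => hπ.not_isUnit ((isUnit_pow_iff (by omega)).mp hu)
  have hunit : ∀ f : F[X], IsUnit (Ideal.Quotient.mk I f) ↔ ¬ π ∣ f := by
    intro f
    constructor
    · rintro hu ⟨c, rfl⟩
      have h0 : (Ideal.Quotient.mk I (π * c)) ^ e = 0 := by
        rw [← map_pow, Ideal.Quotient.eq_zero_iff_mem, mul_pow]
        exact Ideal.mem_span_singleton.mpr ⟨c ^ e, rfl⟩
      have h1 := hu.pow e
      rw [h0, isUnit_zero_iff] at h1
      exact zero_ne_one h1
    · intro hdvd
      have hc : IsCoprime (π ^ e) f := ((hπ.coprime_iff_not_dvd).mpr hdvd).pow_left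
      obtain ⟨u, v, huv⟩ := hc
      refine IsUnit.of_mul_eq_one (Ideal.Quotient.mk I v) ?_
      have h2 : Ideal.Quotient.mk I (u * π ^ e + v * f) = 1 := by rw [huv]; exact map_one _
      have h3 : (Ideal.Quotient.mk I) (π ^ e) = 0 :=
        Ideal.Quotient.eq_zero_iff_mem.mpr (Ideal.mem_span_singleton_self _)
      rw [map_add, map_mul, map_mul, h3, mul_zero, zero_add] at h2
      rw [mul_comm]; exact h2
  set α : F[X] →ₗ[F[X]] F[X] ⧸ I := I.mkQ ∘ₗ (LinearMap.mulLeft F[X] π) with hα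
  have hker : LinearMap.ker α = Ideal.span {π ^ (e - 1)} := by
    ext g
    simp only [hα, LinearMap.mem_ker, LinearMap.comp_apply, Submodule.mkQ_apply,
      LinearMap.mulLeft_apply, Submodule.Quotient.mk_eq_zero, hI, Ideal.mem_span_singleton]
    constructor
    · rintro ⟨c, hc⟩
      refine ⟨c, mul_left_cancel₀ hπ0 ?_⟩
      rw [hc, ← mul_assoc, hpe]
    · rintro ⟨c, rfl⟩
      exact ⟨c, by rw [← mul_assoc, hpe]⟩
  have hrange : (LinearMap.range α : Set (F[X] ⧸ I)) = {x | ¬ IsUnit x} := by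
    ext x
    obtain ⟨f, rfl⟩ := Ideal.Quotient.mk_surjective x
    simp only [Set.mem_setOf_eq, hunit f, not_not, SetLike.mem_coe, LinearMap.mem_range]
    constructor
    · rintro ⟨g, hg⟩
      have hmem : f - π * g ∈ I := by
        rw [← Ideal.Quotient.eq_zero_iff_mem, map_sub, sub_eq_zero, ← hg]
        rfl
      obtain ⟨c, hc⟩ := Ideal.mem_span_singleton.mp hmem
      have hf : f = π * g + π ^ e * c := by rw [← hc]; ring
      exact ⟨g + π ^ (e - 1) * c, by rw [hf, mul_add, ← mul_assoc, hpe]⟩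
    · rintro ⟨c, rfl⟩
      exact ⟨c, rfl⟩
  have e1 : {x : F[X] ⧸ I // ¬ IsUnit x} ≃ LinearMap.range α := Equiv.setCongr hrange.symm
  have hcard_nonunit :
      Nat.card {x : F[X] ⧸ I // ¬ IsUnit x} = Fintype.card F ^ (π.natDegree * (e - 1)) := by
    rw [Nat.card_congr e1, Nat.card_congr (α.quotKerEquivRange).toEquiv.symm, hker,
      card_quot _ (pow_ne_zero _ hπ0), natDegree_pow, mul_comm]
  haveI : Fintype (F[X] ⧸ I) := Fintype.ofFinite _
  have htot : Nat.card (F[X] ⧸ I) = Fintype.card F ^ (π.natDegree * e) := by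
    rw [card_quot _ hPe, natDegree_pow, mul_comm]
  have key : Nat.card {x : F[X] ⧸ I // IsUnit x}
      = Nat.card (F[X] ⧸ I) - Nat.card {x : F[X] ⧸ I // ¬ IsUnit x} := by
    classical
    simp only [Nat.card_eq_fintype_card]
    have h1 := Fintype.card_subtype_compl (fun x : F[X] ⧸ I => IsUnit x)
    have h2 := Fintype.card_subtype_le (fun x : F[X] ⧸ I => IsUnit x)
    omega
  rw [show mu (π ^ e) = Nat.card (F[X] ⧸ I)ˣ from rfl,
    Nat.card_congr (units_equiv_isUnit _), key, htot, hcard_nonunit]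

lemma pow_ineq (q d e : ℕ) (hq : 2 ≤ q) (hd : 1 ≤ d) (he : 1 ≤ e) :
    (q - 1) ^ (d * e) ≤ q ^ (d * e) - q ^ (d * (e - 1)) := by
  have h1 : (q - 1) ^ d + 1 ≤ q ^ d := by
    have : (q - 1) ^ d < q ^ d := Nat.pow_lt_pow_left (by omega) (by omega)
    omega
  have h2 : (q - 1) ^ (d * (e - 1)) ≤ q ^ (d * (e - 1)) := Nat.pow_le_pow_left (by omega) _
  have hde : d * e = d * (e - 1) + d := by
    conv_lhs => rw [show e = (e - 1) + 1 from by omega]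
    rw [Nat.mul_succ]
  have key : (q - 1) ^ (d * e) + q ^ (d * (e - 1)) ≤ q ^ (d * e) := by
    rw [hde, pow_add, pow_add]
    calc (q - 1) ^ (d * (e - 1)) * (q - 1) ^ d + q ^ (d * (e - 1))
        ≤ q ^ (d * (e - 1)) * (q - 1) ^ d + q ^ (d * (e - 1)) := by gcongr
      _ = q ^ (d * (e - 1)) * ((q - 1) ^ d + 1) := by ring
      _ ≤ q ^ (d * (e - 1)) * q ^ d := by
          exact Nat.mul_le_mul_left _ h1
  omega

lemma mu_lb (P : F[X]) (hP : P ≠ 0) : (Fintype.card F - 1) ^ P.natDegree ≤ mu P := by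
  refine UniqueFactorizationMonoid.induction_on_coprime
    (P := fun Q : F[X] => Q ≠ 0 → (Fintype.card F - 1) ^ Q.natDegree ≤ mu Q) P
    (fun h0 => absurd rfl h0) ?_ ?_ ?_ hP
  · intro x hx _
    rw [mu_unit x hx, Polynomial.natDegree_eq_zero_of_isUnit hx, pow_zero]
  · intro p i hp hpi
    rcases Nat.eq_zero_or_pos i with rfl | hi
    · rw [pow_zero, mu_unit 1 isUnit_one, natDegree_one, pow_zero]
    · have hq : 2 ≤ Fintype.card F := Fintype.one_lt_card
      have hp0 : p ≠ 0 := hp.ne_zero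
      have hd : 1 ≤ p.natDegree := by
        have := degree_pos_of_ne_zero_of_nonunit hp0 hp.not_unit
        rwa [← Polynomial.natDegree_pos_iff_degree_pos] at this
      rw [mu_pow p hp.irreducible i hi, natDegree_pow, mul_comm i]
      exact pow_ineq _ _ _ hq hd hi
  · intro x y hrel hx hy hxy
    have hx0 : x ≠ 0 := left_ne_zero_of_mul hxy
    have hy0 : y ≠ 0 := right_ne_zero_of_mul hxy
    rw [mu_mul x y (isRelPrime_iff_isCoprime.mp hrel), Polynomial.natDegree_mul hx0 hy0,
      pow_add]
    exact Nat.mul_le_mul (hx hx0) (hy hy0)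

lemma mu_X_sub_C (a : F) : mu (X - C a) = Fintype.card F - 1 := by
  have := mu_pow (X - C a) (irreducible_X_sub_C a) 1 le_rfl
  simpa using this

lemma mu_prod_linear (T : Finset F) :
    mu (∏ a ∈ T, (X - C a)) = (Fintype.card F - 1) ^ T.card := by
  classical
  induction T using Finset.induction_on with
  | empty => simpa using mu_unit (1 : F[X]) isUnit_one
  | @insert a T ha ih =>
    have hco : IsCoprime (X - C a) (∏ b ∈ T, (X - C b)) := by
      refine (irreducible_X_sub_C a).coprime_iff_not_dvd.mpr ?_
      rw [Polynomial.dvd_iff_isRoot, Polynomial.IsRoot, eval_prod]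
      rw [← Ne, Finset.prod_ne_zero_iff]
      intro b hb
      simp only [eval_sub, eval_X, eval_C, sub_ne_zero]
      exact fun hab => ha (hab ▸ hb)
    rw [Finset.prod_insert ha, mu_mul _ _ hco, ih, mu_X_sub_C,
      Finset.card_insert_of_notMem ha, pow_succ, mul_comm]

end Aux

theorem stmt10 {F : Type*} [Field F] [Fintype F] (h n : ℕ) (hh : 1 ≤ h)
    (S : Finset F) (hS : S.card = n) (hq : n + h ≤ Fintype.card F) :
    IsLeast {m | ∃ P : Polynomial F, P.degree = h ∧
        (∀ s ∈ S, P.eval s ≠ 0) ∧ mu P = m}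
      ((Fintype.card F - 1) ^ h) := by
  classical
  constructor
  · obtain ⟨T, hTsub, hTcard⟩ := Finset.exists_subset_card_eq
      (s := Sᶜ) (n := h) (by rw [Finset.card_compl, hS]; omega)
    refine ⟨∏ a ∈ T, (X - C a), ?_, ?_, ?_⟩
    · rw [Polynomial.degree_prod]
      simp only [Polynomial.degree_X_sub_C, Finset.sum_const, nsmul_eq_mul, mul_one]
      rw [hTcard]
    · intro s hs
      rw [eval_prod, Finset.prod_ne_zero_iff]
      intro a haT
      simp only [eval_sub, eval_X, eval_C, sub_ne_zero]
      exact fun hsa => (Finset.mem_compl.mp (hTsub haT)) (hsa ▸ hs)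
    · rw [mu_prod_linear, hTcard]
  · rintro m ⟨P, hdeg, -, rfl⟩
    have hP0 : P ≠ 0 := fun h0 => by
      rw [h0, degree_zero] at hdeg
      exact absurd hdeg (by simp)
    have hnat : P.natDegree = h := natDegree_eq_of_degree_eq_some hdeg
    calc (Fintype.card F - 1) ^ h = (Fintype.card F - 1) ^ P.natDegree := by rw [hnat]
      _ ≤ mu P := mu_lb P hP0
end

section
/- Let q be a prime power, h even, and S = 𝔽_q (so n = q). Then the minimum of μ(P(X)) over polynomials P ∈ 𝔽_q[X] of degree h with no root in 𝔽_q is (q²−1)^{h/2}, attained by a product of h/2 distinct irreducible quadratics (assuming h/2 does not exceed the number of monic irreducible quadratics over 𝔽_q). -/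
open Polynomial

namespace MuAux

variable {F : Type*} [Field F] [Fintype F]

theorem card_quot {P : F[X]} (hP : P ≠ 0) :
    Nat.card (F[X] ⧸ Ideal.span {P}) = Fintype.card F ^ P.natDegree := by
  have b := (AdjoinRoot.powerBasis hP).basis
  have : Nat.card (AdjoinRoot P) = Nat.card (Fin (AdjoinRoot.powerBasis hP).dim → F) :=
    Nat.card_congr b.equivFun.toEquiv
  rw [show (F[X] ⧸ Ideal.span {P}) = AdjoinRoot P from rfl, this,
    Nat.card_eq_fintype_card, Fintype.card_fun, Fintype.card_fin,
    AdjoinRoot.powerBasis_dim]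

theorem quot_finite {P : F[X]} (hP : P ≠ 0) : Finite (F[X] ⧸ Ideal.span {P}) := by
  have b := (AdjoinRoot.powerBasis hP).basis
  exact Finite.of_equiv _ b.equivFun.toEquiv.symm

theorem mu_pos {P : F[X]} (hP : P ≠ 0) : 0 < mu P := by
  have := quot_finite hP
  exact Nat.card_pos

theorem mu_mul {P Q : F[X]} (h : IsCoprime P Q) : mu (P * Q) = mu P * mu Q := by
  have h1 : Ideal.span {P * Q} = Ideal.span {P} ⊓ Ideal.span {Q} := by
    rw [← Ideal.span_singleton_mul_span_singleton]
    exact Ideal.mul_eq_inf_of_coprime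
      (Ideal.isCoprime_iff_sup_eq.mp ((Ideal.isCoprime_span_singleton_iff P Q).mpr h))
  have e : (F[X] ⧸ Ideal.span {P * Q}) ≃+* (F[X] ⧸ Ideal.span {P}) × (F[X] ⧸ Ideal.span {Q}) := by
    rw [h1]
    exact Ideal.quotientInfEquivQuotientProd _ _
      ((Ideal.isCoprime_span_singleton_iff P Q).mpr h)
  have e2 := (Units.mapEquiv e.toMulEquiv).trans MulEquiv.prodUnits
  unfold mu
  rw [Nat.card_congr e2.toEquiv, Nat.card_prod]

theorem mu_one : mu (1 : F[X]) = 1 := by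
  have : Ideal.span {(1 : F[X])} = ⊤ := Ideal.span_singleton_one
  unfold mu
  rw [this]
  have : Subsingleton (F[X] ⧸ (⊤ : Ideal F[X])) := Ideal.Quotient.subsingleton_iff.mpr rfl
  have : Subsingleton (F[X] ⧸ (⊤ : Ideal F[X]))ˣ := ⟨fun a b => Units.ext (Subsingleton.elim _ _)⟩
  exact Nat.card_of_subsingleton 1

end MuAux

namespace MuAux
variable {F : Type*} [Field F] [Fintype F]

theorem card_units_eq {M : Type*} [Monoid M] :
    Nat.card Mˣ = Nat.card {x : M // IsUnit x} :=
  Nat.card_congr (Equiv.ofBijective (fun u => ⟨u.1, u.isUnit⟩)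
    ⟨fun a b h => Units.ext (congrArg Subtype.val h),
     fun x => ⟨x.2.unit, Subtype.ext x.2.unit_spec⟩⟩)

theorem mu_pow_irreducible {π : F[X]} (hπ : Irreducible π) {e : ℕ} (he : 1 ≤ e) :
    mu (π ^ e) = Fintype.card F ^ (π.natDegree * e) - Fintype.card F ^ (π.natDegree * (e - 1)) := by
  classical
  have hπ0 : π ≠ 0 := hπ.ne_zero
  have hpe : (π ^ e) ≠ 0 := pow_ne_zero _ hπ0
  have hdvd0 : π ∣ π ^ e := dvd_pow_self π (by omega)
  have hle : Ideal.span {π ^ e} ≤ Ideal.span {π} :=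
    Ideal.span_singleton_le_span_singleton.mpr hdvd0
  set φ := Ideal.Quotient.factor hle with hφ
  have hsurj : Function.Surjective φ := by
    intro y
    obtain ⟨f, rfl⟩ := Ideal.Quotient.mk_surjective y
    exact ⟨Ideal.Quotient.mk _ f, Ideal.Quotient.factor_mk hle f⟩
  have key : ∀ x : F[X] ⧸ Ideal.span {π ^ e}, IsUnit x ↔ ¬ (φ x = 0) := by
    intro x
    obtain ⟨f, rfl⟩ := Ideal.Quotient.mk_surjective x
    rw [hφ, Ideal.Quotient.factor_mk]
    constructor
    · rintro hu h0
      obtain ⟨g, hg⟩ := Ideal.mem_span_singleton.mp (Ideal.Quotient.eq_zero_iff_mem.mp h0)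
      obtain ⟨y, hy⟩ := isUnit_iff_exists.mp hu
      obtain ⟨b, rfl⟩ := Ideal.Quotient.mk_surjective y
      have h1 : Ideal.Quotient.mk (Ideal.span {π ^ e}) (f * b - 1) = 0 := by
        rw [map_sub, map_mul, hy.1]; simp
      have h2 : π ^ e ∣ f * b - 1 :=
        Ideal.mem_span_singleton.mp (Ideal.Quotient.eq_zero_iff_mem.mp h1)
      have h3 : π ∣ f * b - 1 := dvd_trans hdvd0 h2
      have h4 : π ∣ f * b := (Dvd.intro g hg.symm).mul_right b
      have h5 : π ∣ 1 := by
        have := dvd_sub h4 h3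
        simpa using this
      exact hπ.not_isUnit (isUnit_of_dvd_one h5)
    · intro h0
      have hndvd : ¬ π ∣ f := fun hd =>
        h0 (Ideal.Quotient.eq_zero_iff_mem.mpr (Ideal.mem_span_singleton.mpr hd))
      have hc : IsCoprime (π ^ e) f := IsCoprime.pow_left (hπ.coprime_iff_not_dvd.mpr hndvd)
      obtain ⟨a, b, hab⟩ := hc
      have h6 := congrArg (Ideal.Quotient.mk (Ideal.span {π ^ e})) hab
      have hz : Ideal.Quotient.mk (Ideal.span {π ^ e}) (π ^ e) = 0 :=
        Ideal.Quotient.eq_zero_iff_mem.mpr (Ideal.mem_span_singleton.mpr dvd_rfl)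
      rw [map_add, map_mul, map_mul, map_one, hz, mul_zero, zero_add] at h6
      exact isUnit_iff_exists.mpr ⟨Ideal.Quotient.mk _ b, by rw [mul_comm]; exact h6, h6⟩
  -- now count
  have hR : Finite (F[X] ⧸ Ideal.span {π ^ e}) := quot_finite hpe
  have hK : Finite (F[X] ⧸ Ideal.span {π}) := quot_finite hπ0
  letI : Fintype (F[X] ⧸ Ideal.span {π ^ e}) := Fintype.ofFinite _
  have hq : 0 < Fintype.card F := Fintype.card_pos
  have hdeg : (π ^ e).natDegree = π.natDegree * e := by rw [natDegree_pow]; ring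
  have hde : π.natDegree * e = π.natDegree + π.natDegree * (e - 1) := by
    cases e with
    | zero => omega
    | succ e' => simp [Nat.mul_succ]; ring
  have hker : Nat.card {x : F[X] ⧸ Ideal.span {π ^ e} // φ x = 0}
      = Fintype.card F ^ (π.natDegree * (e - 1)) := by
    have e1 : {x : F[X] ⧸ Ideal.span {π ^ e} // φ x = 0} ≃ (φ.toAddMonoidHom.ker) :=
      Equiv.subtypeEquivRight (fun x => Iff.symm AddMonoidHom.mem_ker)
    have e2 := QuotientAddGroup.quotientKerEquivOfSurjective φ.toAddMonoidHom hsurj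
    have hcard := AddSubgroup.card_eq_card_quotient_mul_card_addSubgroup φ.toAddMonoidHom.ker
    rw [Nat.card_congr e2.toEquiv, card_quot hpe, card_quot hπ0, hdeg, hde, pow_add] at hcard
    rw [Nat.card_congr e1]
    exact (Nat.eq_of_mul_eq_mul_left (pow_pos hq _) hcard.symm)
  have hmu : mu (π ^ e) = Nat.card {x : F[X] ⧸ Ideal.span {π ^ e} // ¬ (φ x = 0)} := by
    rw [mu, card_units_eq, Nat.card_congr (Equiv.subtypeEquivRight key)]
  have hcompl : Nat.card {x : F[X] ⧸ Ideal.span {π ^ e} // ¬ (φ x = 0)}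
      = Fintype.card (F[X] ⧸ Ideal.span {π ^ e}) - Nat.card {x : F[X] ⧸ Ideal.span {π ^ e} // φ x = 0} := by
    rw [Nat.card_eq_fintype_card, Nat.card_eq_fintype_card, Fintype.card_subtype_compl]
  rw [hmu, hcompl, hker, ← Nat.card_eq_fintype_card, card_quot hpe, hdeg]

theorem num_key {q d e : ℕ} (hq : 2 ≤ q) (hd : 2 ≤ d) (he : 1 ≤ e) :
    (q ^ 2 - 1) ^ (d * e) ≤ (q ^ (d * e) - q ^ (d * (e - 1))) ^ 2 := by
  obtain ⟨d', rfl⟩ : ∃ d', d = d' + 2 := ⟨d - 2, by omega⟩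
  obtain ⟨e', rfl⟩ : ∃ e', e = e' + 1 := ⟨e - 1, by omega⟩
  have ha : 1 ≤ q ^ d' := Nat.one_le_pow _ _ (by omega)
  have key : q ^ d' * (q ^ 2 - 1) ≤ q ^ (d' + 2) - 1 := by
    have h2 : q ^ d' * (q ^ 2 - 1) = q ^ (d' + 2) - q ^ d' := by
      rw [Nat.mul_sub, mul_one, ← pow_add]
    rw [h2]
    exact Nat.sub_le_sub_left ha _
  have e1 : (d' + 2) * (e' + 1) = ((d' + 2) * e' + d') + 2 := by ring
  have g1 : (d' + 2) * (e' + 1) = (d' + 2) * e' + (d' + 2) := by ring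
  have efin : q ^ ((d' + 2) * (e' + 1)) - q ^ ((d' + 2) * (e' + 1 - 1))
      = q ^ ((d' + 2) * e') * (q ^ (d' + 2) - 1) := by
    rw [show (e' + 1 - 1) = e' from rfl, g1, pow_add, Nat.mul_sub, mul_one]
  rw [efin]
  have hsplit : ((q ^ 2 : ℕ)) ^ ((d' + 2) * e' + d')
      = (q ^ ((d' + 2) * e')) ^ 2 * (q ^ d') ^ 2 := by
    rw [← pow_mul, ← pow_mul, ← pow_mul, ← pow_add]
    congr 1
    ring
  calc (q ^ 2 - 1) ^ ((d' + 2) * (e' + 1))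
      = (q ^ 2 - 1) ^ ((d' + 2) * e' + d') * (q ^ 2 - 1) ^ 2 := by
        rw [← pow_add, e1]
    _ ≤ (q ^ 2) ^ ((d' + 2) * e' + d') * (q ^ 2 - 1) ^ 2 :=
        Nat.mul_le_mul_right _ (Nat.pow_le_pow_left (Nat.sub_le _ _) _)
    _ = (q ^ ((d' + 2) * e')) ^ 2 * (q ^ d' * (q ^ 2 - 1)) ^ 2 := by
        rw [mul_pow, ← mul_assoc, ← hsplit]
    _ ≤ (q ^ ((d' + 2) * e')) ^ 2 * (q ^ (d' + 2) - 1) ^ 2 :=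
        Nat.mul_le_mul_left _ (Nat.pow_le_pow_left key 2)
    _ = (q ^ ((d' + 2) * e') * (q ^ (d' + 2) - 1)) ^ 2 := (mul_pow _ _ _).symm

theorem two_le_card (F : Type*) [Field F] [Fintype F] : 2 ≤ Fintype.card F :=
  Fintype.one_lt_card

theorem two_le_natDegree_of_no_root {π : F[X]} (hπ : Irreducible π)
    (h : ∀ x : F, π.eval x ≠ 0) : 2 ≤ π.natDegree := by
  rcases Nat.lt_or_ge π.natDegree 2 with h2 | h2
  · exfalso
    interval_cases hn : π.natDegree
    · exact hπ.natDegree_pos.ne' hn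
    · obtain ⟨x, hx⟩ := exists_root_of_degree_eq_one
        (degree_eq_iff_natDegree_eq hπ.ne_zero |>.mpr hn)
      exact h x hx
  · exact h2

theorem mu_pow_sq {π : F[X]} (hπ : Irreducible π) (hd : 2 ≤ π.natDegree) {e : ℕ} (he : 1 ≤ e) :
    (Fintype.card F ^ 2 - 1) ^ (π.natDegree * e) ≤ (mu (π ^ e)) ^ 2 := by
  rw [mu_pow_irreducible hπ he]
  exact num_key (two_le_card F) hd he

theorem lb : ∀ n (P : F[X]), P.natDegree ≤ n → P ≠ 0 → (∀ x : F, P.eval x ≠ 0) →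
    (Fintype.card F ^ 2 - 1) ^ P.natDegree ≤ (mu P) ^ 2 := by
  intro n
  induction n using Nat.strong_induction_on with
  | _ n ih =>
    intro P hdeg hP hroot
    by_cases hu : IsUnit P
    · rw [natDegree_eq_zero_of_isUnit hu, pow_zero]
      exact Nat.one_le_pow _ _ (mu_pos hP)
    · obtain ⟨π, hπ, hπdvd⟩ := WfDvdMonoid.exists_irreducible_factor hu hP
      have hfin : FiniteMultiplicity π P := FiniteMultiplicity.of_not_isUnit hπ.not_isUnit hP
      obtain ⟨Q, hPQ, hndvd⟩ := hfin.exists_eq_pow_mul_and_not_dvd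
      set e := multiplicity π P with he'
      have he : 1 ≤ e := multiplicity_pos_of_dvd hπdvd
      have hQ0 : Q ≠ 0 := fun h => hP (by rw [hPQ, h, mul_zero])
      have hπroot : ∀ x : F, π.eval x ≠ 0 := by
        intro x hx
        apply hroot x
        obtain ⟨c, hc⟩ := hπdvd
        rw [hc, eval_mul, hx, zero_mul]
      have hd : 2 ≤ π.natDegree := two_le_natDegree_of_no_root hπ hπroot
      have hQroot : ∀ x : F, Q.eval x ≠ 0 := by
        intro x hx; apply hroot x; rw [hPQ, eval_mul, hx, mul_zero]
      have hcop : IsCoprime (π ^ e) Q := IsCoprime.pow_left (hπ.coprime_iff_not_dvd.mpr hndvd)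
      have hdegs : P.natDegree = π.natDegree * e + Q.natDegree := by
        rw [hPQ, natDegree_mul (pow_ne_zero _ hπ.ne_zero) hQ0, natDegree_pow]; ring
      have h2 : 2 * 1 ≤ π.natDegree * e := Nat.mul_le_mul hd he
      have hQlt : Q.natDegree < n := by omega
      have ihQ := ih Q.natDegree hQlt Q le_rfl hQ0 hQroot
      have hmu : mu P = mu (π ^ e) * mu Q := by rw [hPQ]; exact mu_mul hcop
      calc (Fintype.card F ^ 2 - 1) ^ P.natDegree
          = (Fintype.card F ^ 2 - 1) ^ (π.natDegree * e) * (Fintype.card F ^ 2 - 1) ^ Q.natDegree := by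
            rw [hdegs, pow_add]
        _ ≤ (mu (π ^ e)) ^ 2 * (mu Q) ^ 2 := Nat.mul_le_mul (mu_pow_sq hπ hd he) ihQ
        _ = (mu P) ^ 2 := by rw [hmu, mul_pow]

theorem mu_irred {p : F[X]} (hp : Irreducible p) :
    mu p = Fintype.card F ^ p.natDegree - 1 := by
  classical
  haveI hmax : (Ideal.span {p}).IsMaximal := PrincipalIdealRing.isMaximal_of_irreducible hp
  letI := Ideal.Quotient.field (Ideal.span {p})
  haveI := quot_finite hp.ne_zero
  letI : Fintype (F[X] ⧸ Ideal.span {p}) := Fintype.ofFinite _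
  have h1 : Nat.card (F[X] ⧸ Ideal.span {p}) = Fintype.card F ^ p.natDegree :=
    card_quot hp.ne_zero
  rw [mu, Nat.card_eq_fintype_card, Fintype.card_units, ← h1, Nat.card_eq_fintype_card]

theorem mu_prod (T : Finset F[X]) (h : ∀ p ∈ T, p.Monic ∧ Irreducible p ∧ p.natDegree = 2) :
    mu (∏ p ∈ T, p) = (Fintype.card F ^ 2 - 1) ^ T.card := by
  classical
  induction T using Finset.induction_on with
  | empty => simpa using mu_one
  | @insert p T hpT ihT =>
    have hp := h p (Finset.mem_insert_self _ _)
    have hT : ∀ q ∈ T, q.Monic ∧ Irreducible q ∧ q.natDegree = 2 :=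
      fun q hq => h q (Finset.mem_insert_of_mem hq)
    have hcop : IsCoprime p (∏ q ∈ T, q) := IsCoprime.prod_right fun q hq => by
      refine (hp.2.1.coprime_iff_not_dvd).mpr ?_
      intro hdvd
      have hassoc := hp.2.1.associated_of_dvd (hT q hq).2.1 hdvd
      have heq := eq_of_monic_of_associated hp.1 (hT q hq).1 hassoc
      exact hpT (heq ▸ hq)
    rw [Finset.prod_insert hpT, mu_mul hcop, ihT hT, Finset.card_insert_of_notMem hpT,
      mu_irred hp.2.1, hp.2.2, pow_succ]
    ring

theorem exists_min_poly (k : ℕ) (hk : k ≤ Fintype.card F * (Fintype.card F - 1) / 2) :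
    ∃ P : F[X], P.degree = 2 * (k : ℕ) ∧ (∀ x : F, P.eval x ≠ 0) ∧
      mu P = (Fintype.card F ^ 2 - 1) ^ k := by
  classical
  set q := Fintype.card F with hq
  set M : Finset F[X] :=
    Finset.image (fun bc : F × F => X ^ 2 + (C bc.1 * X + C bc.2)) Finset.univ with hM
  have hMdeg : ∀ p ∈ M, p.Monic ∧ p.natDegree = 2 := by
    intro p hp
    obtain ⟨bc, -, rfl⟩ := Finset.mem_image.mp hp
    have hdlt : (C bc.1 * X + C bc.2).degree < 2 :=
      lt_of_le_of_lt (degree_add_le _ _)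
        (max_lt (lt_of_le_of_lt (degree_C_mul_X_le _) (by norm_num))
          (lt_of_le_of_lt (degree_C_le) (by norm_num)))
    refine ⟨monic_X_pow_add hdlt, ?_⟩
    have hdeg : (X ^ 2 + (C bc.1 * X + C bc.2)).degree = 2 := by
      rw [degree_add_eq_left_of_degree_lt (by rwa [degree_X_pow]), degree_X_pow]
      norm_cast
    exact natDegree_eq_of_degree_eq_some hdeg
  have hinj : Function.Injective (fun bc : F × F => X ^ 2 + (C bc.1 * X + C bc.2)) := by
    intro x y hxy
    have h1 := congrArg (fun p => p.coeff 1) hxy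
    have h0 := congrArg (fun p => p.coeff 0) hxy
    simp [coeff_X_pow] at h1 h0
    exact Prod.ext h1 h0
  have hMcard : M.card = q ^ 2 := by
    rw [hM, Finset.card_image_of_injective _ hinj, Finset.card_univ, Fintype.card_prod]
    ring
  set g : Sym2 F → F[X] :=
    Sym2.lift ⟨fun a b => (X - C a) * (X - C b), fun a b => mul_comm _ _⟩ with hg
  have hcover : ∀ p ∈ M, (∃ x : F, p.eval x = 0) → p ∈ Finset.image g Finset.univ := by
    rintro p hp ⟨x, hx⟩
    obtain ⟨hmonic, hdeg2⟩ := hMdeg p hp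
    obtain ⟨r, hr⟩ := dvd_iff_isRoot.mpr hx
    have hrm : r.Monic := Monic.of_mul_monic_left (monic_X_sub_C x) (hr ▸ hmonic)
    have hr1 : r.natDegree = 1 := by
      have hx0 : (X - C x : F[X]) ≠ 0 := X_sub_C_ne_zero x
      have hr0 : r ≠ 0 := hrm.ne_zero
      have hd := congrArg natDegree hr
      rw [natDegree_mul hx0 hr0, natDegree_X_sub_C, hdeg2] at hd
      omega
    have hreq : r = X - C (-(r.coeff 0)) := by
      rw [map_neg, sub_neg_eq_add]
      exact hrm.eq_X_add_C hr1
    refine Finset.mem_image.mpr ⟨s(x, -(r.coeff 0)), Finset.mem_univ _, ?_⟩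
    rw [hg, Sym2.lift_mk]
    show (X - C x) * (X - C (-(r.coeff 0))) = p
    rw [← hreq, ← hr]
  have hSym : (Finset.image g Finset.univ).card ≤ (q + 1) * q / 2 := by
    calc (Finset.image g Finset.univ).card ≤ (Finset.univ : Finset (Sym2 F)).card :=
          Finset.card_image_le
      _ = (q + 1) * q / 2 := by
          rw [Finset.card_univ, Sym2.card, Nat.choose_two_right, hq, Nat.add_sub_cancel]
  set S : Finset F[X] := M.filter (fun p => ¬ ∃ x : F, p.eval x = 0) with hS
  have hsub : M.filter (fun p => ∃ x : F, p.eval x = 0) ⊆ Finset.image g Finset.univ := by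
    intro p hp
    obtain ⟨hpM, hpx⟩ := Finset.mem_filter.mp hp
    exact hcover p hpM hpx
  have hScard : q ^ 2 ≤ S.card + (q + 1) * q / 2 := by
    have h1 : S.card = M.card - (M.filter (fun p => ∃ x : F, p.eval x = 0)).card := by
      rw [hS, Finset.filter_not, Finset.card_sdiff_of_subset (Finset.filter_subset _ _)]
    have h2 := Finset.card_le_card hsub
    have h3 := Finset.card_filter_le M (fun p => ∃ x : F, p.eval x = 0)
    omega
  have hkS : k ≤ S.card := by
    have hq1 : 1 ≤ q := Fintype.card_pos
    have hA : (q + 1) * q = q * q + q := by ring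
    have hB : q * (q - 1) = q * q - q := by rw [Nat.mul_sub, mul_one]
    have heven1 : 2 ∣ (q + 1) * q := by
      rw [mul_comm]; exact (Nat.even_mul_succ_self q).two_dvd
    have heven2 : 2 ∣ q * (q - 1) := by
      have : q * (q - 1) = (q - 1) * ((q - 1) + 1) := by rw [Nat.sub_add_cancel hq1]; ring
      rw [this]; exact (Nat.even_mul_succ_self (q - 1)).two_dvd
    have h1 := Nat.div_mul_cancel heven1
    have h2 := Nat.div_mul_cancel heven2
    have hq2 : q ^ 2 = q * q := by ring
    have hqle : q ≤ q * q := Nat.le_mul_of_pos_left q hq1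
    omega
  obtain ⟨T, hTS, hTcard⟩ := Finset.exists_subset_card_eq hkS
  have hTprop : ∀ p ∈ T, p.Monic ∧ Irreducible p ∧ p.natDegree = 2 := by
    intro p hpT
    obtain ⟨hpM, hpnr⟩ := Finset.mem_filter.mp (hTS hpT)
    obtain ⟨hmonic, hdeg2⟩ := hMdeg p hpM
    refine ⟨hmonic, ?_, hdeg2⟩
    rw [hmonic.irreducible_iff_roots_eq_zero_of_degree_le_three (by omega) (by omega)]
    rw [Multiset.eq_zero_iff_forall_notMem]
    intro a ha
    exact hpnr ⟨a, (mem_roots hmonic.ne_zero).mp ha⟩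
  refine ⟨∏ p ∈ T, p, ?_, ?_, ?_⟩
  · have hmon : (∏ p ∈ T, p).Monic := monic_prod_of_monic _ _ fun p hp => (hTprop p hp).1
    have hnd : (∏ p ∈ T, p).natDegree = 2 * k := by
      rw [natDegree_prod _ _ fun p hp => (hTprop p hp).2.1.ne_zero]
      rw [Finset.sum_congr rfl fun p hp => (hTprop p hp).2.2, Finset.sum_const, hTcard]
      ring
    rw [degree_eq_natDegree hmon.ne_zero, hnd]
    push_cast
    ring
  · intro x
    rw [eval_prod]
    refine Finset.prod_ne_zero_iff.mpr fun p hp => fun h0 => ?_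
    exact (Finset.mem_filter.mp (hTS hp)).2 ⟨x, h0⟩
  · rw [mu_prod T hTprop, hTcard]

end MuAux

theorem stmt11 {F : Type*} [Field F] [Fintype F] (k : ℕ)
    (hk : k ≤ Fintype.card F * (Fintype.card F - 1) / 2) :
    IsLeast {m | ∃ P : Polynomial F, P.degree = 2 * k ∧
        (∀ x : F, P.eval x ≠ 0) ∧ mu P = m}
      ((Fintype.card F ^ 2 - 1) ^ k) := by
  constructor
  · obtain ⟨P, h1, h2, h3⟩ := MuAux.exists_min_poly k hk
    exact ⟨P, h1, h2, h3⟩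
  · rintro m ⟨P, hdeg, hroot, rfl⟩
    have hdeg' : P.degree = ((2 * k : ℕ) : WithBot ℕ) := by rw [hdeg]; push_cast; ring
    have hP : P ≠ 0 := fun h => WithBot.bot_ne_coe
      (by rw [h, Polynomial.degree_zero] at hdeg'; exact hdeg')
    have hnd : P.natDegree = 2 * k := Polynomial.natDegree_eq_of_degree_eq_some hdeg'
    have hlb := MuAux.lb P.natDegree P le_rfl hP hroot
    rw [hnd] at hlb
    have h2 : ((Fintype.card F ^ 2 - 1) ^ k) ^ 2 ≤ (mu P) ^ 2 := by
      rw [← pow_mul, mul_comm k 2]; exact hlb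
    exact (Nat.pow_le_pow_iff_left (by norm_num)).mp h2
end

section
/- Let c(n,h) denote the smallest cardinality of a finite abelian group containing a B_h-sequence of length n. If q ≥ n is a prime power, then c(n,h) ≤ (q−1)^h, provided q ≥ n + h or more generally there exist n distinct elements a₁,…,aₙ ∈ 𝔽_q avoiding the roots of a product of h distinct linear factors; in particular for q ≥ n+h we have c(n,h) ≤ (q−1)^h. -/
/-- `c(n,h)`: the smallest cardinality of a finite abelian group containing a
`B_h`-sequence of length `n`. -/
noncomputable def cnh (n h : ℕ) : ℕ :=
  sInf {c | ∃ (G : Type) (_ : AddCommGroup G) (_ : Fintype G) (g : Fin n → G),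
    Fintype.card G = c ∧ IsBhSeq h g}

theorem stmt12 (n h : ℕ) (F : Type) [Field F] [Fintype F]
    (hq : n + h ≤ Fintype.card F) :
    cnh n h ≤ (Fintype.card F - 1) ^ h := by
  classical
  obtain ⟨e⟩ : Nonempty (Fin (n + h) ↪ F) :=
    Function.Embedding.nonempty_of_card_le (by simpa using hq)
  set a : Fin n → F := fun i => e (Fin.castAdd h i) with ha
  set b : Fin h → F := fun j => e (Fin.natAdd n j) with hb
  have hab : ∀ i j, b j ≠ a i := by
    intro i j hEq
    have := e.injective hEq
    have h1 : (Fin.natAdd n j : Fin (n + h)).val = (Fin.castAdd h i : Fin (n + h)).val := by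
      rw [this]
    simp [Fin.natAdd, Fin.castAdd] at h1
    omega
  have hainj : Function.Injective a := fun i j hij => by
    have := e.injective hij
    exact Fin.castAdd_injective n h this
  have hbinj : Function.Injective b := fun i j hij => by
    have := e.injective hij
    have h2 := congrArg Fin.val this
    simp [Fin.natAdd] at h2
    exact Fin.ext h2
  let u : Fin n → Fin h → Fˣ := fun i j => Units.mk0 (b j - a i) (sub_ne_zero.mpr (hab i j))
  let g : Fin n → Additive (Fin h → Fˣ) := fun i => Additive.ofMul (u i)
  apply Nat.sInf_le
  refine ⟨Additive (Fin h → Fˣ), inferInstance, inferInstance, g, ?_, ?_⟩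
  · rw [Fintype.card_congr Additive.toMul]
    simp [Fintype.card_fun, Fintype.card_units]
  · intro s t hs ht hsum
    -- turn the sum equality into a product equality in `Fin h → Fˣ`
    have hprod : (∏ i, u (s i)) = ∏ i, u (t i) := by
      have := congrArg Additive.toMul hsum
      simpa [g, toMul_sum] using this
    -- componentwise, in `F`
    have hFeq : ∀ j : Fin h, (∏ i, (b j - a (s i))) = ∏ i, (b j - a (t i)) := by
      intro j
      have h1 := congrFun hprod j
      simp only [Finset.prod_apply] at h1
      have h2 := congrArg (Units.coeHom F) h1
      simpa [u, map_prod] using h2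
    -- polynomials
    set A : Polynomial F := ∏ i, (Polynomial.X - Polynomial.C (a (s i))) with hA
    set B : Polynomial F := ∏ i, (Polynomial.X - Polynomial.C (a (t i))) with hB
    have hAmonic : A.Monic := Polynomial.monic_prod_of_monic _ _ fun i _ =>
      Polynomial.monic_X_sub_C _
    have hBmonic : B.Monic := Polynomial.monic_prod_of_monic _ _ fun i _ =>
      Polynomial.monic_X_sub_C _
    have hAdeg : A.natDegree = h := by
      rw [hA, Polynomial.natDegree_prod_of_monic _ _ fun i _ => Polynomial.monic_X_sub_C _]
      simp
    have hBdeg : B.natDegree = h := by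
      rw [hB, Polynomial.natDegree_prod_of_monic _ _ fun i _ => Polynomial.monic_X_sub_C _]
      simp
    have hevalA : ∀ j, A.eval (b j) = ∏ i, (b j - a (s i)) := by
      intro j; simp [hA, Polynomial.eval_prod]
    have hevalB : ∀ j, B.eval (b j) = ∏ i, (b j - a (t i)) := by
      intro j; simp [hB, Polynomial.eval_prod]
    have hABeq : A = B := by
      rcases eq_or_ne A B with hEq | hne
      · exact hEq
      have hsub : A - B ≠ 0 := sub_ne_zero.mpr hne
      have hdegsub : (A - B).natDegree < h := by
        have hdlt : (A - B).degree < A.degree := by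
          apply Polynomial.degree_sub_lt
          · rw [Polynomial.degree_eq_natDegree hAmonic.ne_zero,
              Polynomial.degree_eq_natDegree hBmonic.ne_zero, hAdeg, hBdeg]
          · exact hAmonic.ne_zero
          · rw [hAmonic.leadingCoeff, hBmonic.leadingCoeff]
        have : (A - B).degree < (h : ℕ) := by
          rwa [Polynomial.degree_eq_natDegree hAmonic.ne_zero, hAdeg] at hdlt
        exact (Polynomial.natDegree_lt_iff_degree_lt hsub).mpr (by exact_mod_cast this)
      have : A - B = 0 := by
        apply Polynomial.eq_zero_of_natDegree_lt_card_of_eval_eq_zero (A - B) hbinj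
        · intro j
          simp [Polynomial.eval_sub, hevalA, hevalB, hFeq j]
        · simpa using hdegsub
      exact (sub_eq_zero.mp this)
    -- from polynomial equality, equal multisets of roots
    have hmul : Multiset.map (fun i => a (s i)) Finset.univ.val
        = Multiset.map (fun i => a (t i)) Finset.univ.val := by
      have h1 : A = (Multiset.map (fun x => Polynomial.X - Polynomial.C x)
          (Multiset.map (fun i => a (s i)) Finset.univ.val)).prod := by
        rw [hA, Finset.prod_eq_multiset_prod, Multiset.map_map]; rfl
      have h2 : B = (Multiset.map (fun x => Polynomial.X - Polynomial.C x)
          (Multiset.map (fun i => a (t i)) Finset.univ.val)).prod := by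
        rw [hB, Finset.prod_eq_multiset_prod, Multiset.map_map]; rfl
      have := congrArg Polynomial.roots (h1 ▸ h2 ▸ hABeq)
      rwa [Polynomial.roots_multiset_prod_X_sub_C, Polynomial.roots_multiset_prod_X_sub_C] at this
    -- cancel the injective `a`
    have hms : Multiset.map s Finset.univ.val = Multiset.map t Finset.univ.val := by
      apply Multiset.map_injective hainj
      rwa [Multiset.map_map, Multiset.map_map]
    -- lists
    have hlist : (List.ofFn s : Multiset (Fin n)) = (List.ofFn t : Multiset (Fin n)) := by
      rwa [Fin.univ_val_map, Fin.univ_val_map] at hms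
    have hperm : (List.ofFn s).Perm (List.ofFn t) := Multiset.coe_eq_coe.mp hlist
    have hsorted_s : (List.ofFn s).Pairwise (· ≤ ·) := (List.sortedLE_ofFn_iff.mpr hs).pairwise
    have hsorted_t : (List.ofFn t).Pairwise (· ≤ ·) := (List.sortedLE_ofFn_iff.mpr ht).pairwise
    exact List.ofFn_injective (List.Perm.eq_of_pairwise' hsorted_s hsorted_t hperm)
end

section
/- For all positive integers n, h, w with w ≤ n: A(n, 2h+2, w) ≥ C(n,w) / (∑_{i=0}^{h} C(w,i)·C(n−w,i)). (Gilbert–Varshamov type bound for constant weight codes.) -/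
open Finset

namespace GV13

variable {n : ℕ}

/-- The support of a binary word as a finset. -/
def supp (x : Fin n → ZMod 2) : Finset (Fin n) := {i | x i ≠ 0}

lemma mem_supp {x : Fin n → ZMod 2} {i : Fin n} : i ∈ supp x ↔ x i ≠ 0 := by
  simp [supp]

lemma card_supp (x : Fin n → ZMod 2) : (supp x).card = hammingNorm x := rfl

lemma supp_injective : Function.Injective (supp (n := n)) := by
  intro x y hxy
  funext i
  have h1 : x i ≠ 0 ↔ y i ≠ 0 := by
    rw [← mem_supp, ← mem_supp, hxy]
  generalize x i = a at h1 ⊢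
  generalize y i = b at h1 ⊢
  revert h1
  revert a b
  decide

lemma dist_eq (x y : Fin n → ZMod 2) :
    hammingDist x y = (supp x \ supp y).card + (supp y \ supp x).card := by
  rw [← Finset.card_union_of_disjoint disjoint_sdiff_sdiff]
  unfold hammingDist
  congr 1
  ext i
  simp only [mem_filter, mem_univ, true_and, mem_union, mem_sdiff, mem_supp]
  generalize x i = a
  generalize y i = b
  revert a b
  decide

lemma sdiff_card_eq {x y : Fin n → ZMod 2} (hxy : hammingNorm x = hammingNorm y) :
    (supp x \ supp y).card = (supp y \ supp x).card := by
  have h1 := Finset.card_inter_add_card_sdiff (supp x) (supp y)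
  have h2 := Finset.card_inter_add_card_sdiff (supp y) (supp x)
  rw [Finset.inter_comm] at h2
  have h3 : (supp x).card = (supp y).card := by rw [card_supp, card_supp, hxy]
  omega

lemma recover (s t : Finset (Fin n)) : (s \ (s \ t)) ∪ (t \ s) = t := by
  ext i
  simp only [mem_union, mem_sdiff]
  tauto

lemma ball_card (w h : ℕ) (hw : w ≤ n) (x : Fin n → ZMod 2) (hx : hammingNorm x = w) :
    ((univ.filter (fun y : Fin n → ZMod 2 =>
        hammingNorm y = w ∧ hammingDist x y ≤ 2 * h + 1)).card : ℕ)
      ≤ ∑ i ∈ Finset.range (h + 1), (w.choose i) * ((n - w).choose i) := by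
  classical
  set T : Finset (Finset (Fin n) × Finset (Fin n)) :=
    (Finset.range (h + 1)).biUnion
      (fun i => (supp x).powersetCard i ×ˢ ((supp x)ᶜ.powersetCard i)) with hT
  have hcardT : T.card = ∑ i ∈ Finset.range (h + 1), (w.choose i) * ((n - w).choose i) := by
    rw [hT, Finset.card_biUnion]
    · apply Finset.sum_congr rfl
      intro i _
      rw [Finset.card_product, Finset.card_powersetCard, Finset.card_powersetCard,
        card_supp, hx, Finset.card_compl, card_supp, hx, Fintype.card_fin]
    · intro i _ j _ hij
      simp only [Finset.disjoint_left]
      rintro ⟨A, B⟩ hA hB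
      simp only [Finset.mem_product, Finset.mem_powersetCard] at hA hB
      exact hij (hA.1.2.symm.trans hB.1.2)
  rw [← hcardT]
  apply Finset.card_le_card_of_injOn (fun y => (supp x \ supp y, supp y \ supp x))
  · intro y hy
    simp only [Finset.mem_coe, mem_filter, mem_univ, true_and] at hy
    obtain ⟨hyw, hyd⟩ := hy
    have heq : (supp x \ supp y).card = (supp y \ supp x).card :=
      sdiff_card_eq (by rw [hx, hyw])
    have hle : (supp x \ supp y).card ≤ h := by
      rw [dist_eq] at hyd; omega
    simp only [Finset.mem_coe, hT, Finset.mem_biUnion, Finset.mem_range, Finset.mem_product,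
      Finset.mem_powersetCard]
    exact ⟨(supp x \ supp y).card, by omega,
      ⟨Finset.sdiff_subset, rfl⟩,
      ⟨fun i hi => by
        simp only [Finset.mem_compl, mem_sdiff] at hi ⊢; exact hi.2, heq.symm⟩⟩
  · intro y1 _ y2 _ hf
    simp only [Prod.mk.injEq] at hf
    apply supp_injective
    have := recover (supp x) (supp y1)
    rw [hf.1, hf.2, recover] at this
    exact this.symm

lemma card_weight (w : ℕ) :
    (univ.filter (fun y : Fin n → ZMod 2 => hammingNorm y = w)).card = n.choose w := by
  classical
  have h1 : (Finset.powersetCard w (univ : Finset (Fin n))).card = n.choose w := by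
    rw [Finset.card_powersetCard, Finset.card_univ, Fintype.card_fin]
  rw [← h1]
  refine Finset.card_bij (fun y _ => supp y) ?_ ?_ ?_
  · intro y hy
    simp only [mem_filter, mem_univ, true_and] at hy
    rw [Finset.mem_powersetCard]
    exact ⟨Finset.subset_univ _, by rw [card_supp, hy]⟩
  · intro y1 h1 y2 h2 hf
    exact supp_injective hf
  · intro s hs
    rw [Finset.mem_powersetCard] at hs
    refine ⟨fun i => if i ∈ s then 1 else 0, ?_, ?_⟩
    · simp only [mem_filter, mem_univ, true_and]
      rw [← card_supp]
      have : supp (fun i => if i ∈ s then (1 : ZMod 2) else 0) = s := by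
        ext i
        rw [mem_supp]
        by_cases hi : i ∈ s <;> simp [hi]
      rw [this, hs.2]
    · ext i
      rw [mem_supp]
      by_cases hi : i ∈ s <;> simp [hi]

end GV13

theorem stmt13 (n h w : ℕ) (hn : 0 < n) (hh : 0 < h) (hw0 : 0 < w) (hw : w ≤ n) :
    (n.choose w : ℝ) / (∑ i ∈ Finset.range (h + 1), (w.choose i) * ((n - w).choose i))
      ≤ Aw n (2 * h + 2) w := by
  classical
  open Finset GV13 in
  set V : ℕ := ∑ i ∈ Finset.range (h + 1), (w.choose i) * ((n - w).choose i) with hV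
  have hVpos : 0 < V := by
    rw [hV]
    apply Finset.sum_pos'
    · intro i _; positivity
    · exact ⟨0, Finset.mem_range.2 (by omega), by simp⟩
  -- the property of being a valid code
  set P : Finset (Fin n → ZMod 2) → Prop := fun C =>
    (∀ x ∈ C, hammingNorm x = w) ∧
    ∀ x ∈ C, ∀ y ∈ C, x ≠ y → 2 * h + 2 ≤ hammingDist x y with hP
  -- pick a maximum-size valid code
  obtain ⟨C, hCmem, hCmax⟩ := Finset.exists_max_image (Finset.univ.filter P) Finset.card
    ⟨∅, by simp [hP]⟩
  rw [Finset.mem_filter] at hCmem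
  have hCP : P C := hCmem.2
  -- maximality: every weight-w word is close to a codeword
  have hcover : ∀ y : Fin n → ZMod 2, hammingNorm y = w →
      ∃ x ∈ C, hammingDist x y ≤ 2 * h + 1 := by
    intro y hy
    by_contra hcon
    push_neg at hcon
    have hdist : ∀ x ∈ C, 2 * h + 2 ≤ hammingDist x y := fun x hx => hcon x hx
    have hynot : y ∉ C := by
      intro hyC
      have := hdist y hyC
      simp at this
    have hP' : P (insert y C) := by
      constructor
      · intro x hx
        rcases Finset.mem_insert.1 hx with rfl | hx
        · exact hy
        · exact hCP.1 x hx
      · intro a ha b hb hab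
        have ha' := Finset.mem_insert.1 ha
        have hb' := Finset.mem_insert.1 hb
        rcases ha' with ha' | ha' <;> rcases hb' with hb' | hb'
        · exact absurd (ha'.trans hb'.symm) hab
        · subst ha'; rw [hammingDist_comm]; exact hdist b hb'
        · subst hb'; exact hdist a ha'
        · exact hCP.2 a ha' b hb' hab
    have hle := hCmax (insert y C) (Finset.mem_filter.2 ⟨Finset.mem_univ _, hP'⟩)
    rw [Finset.card_insert_of_notMem hynot] at hle
    omega
  -- counting
  have hsub : (Finset.univ.filter (fun y : Fin n → ZMod 2 => hammingNorm y = w)) ⊆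
      C.biUnion (fun x => Finset.univ.filter (fun y : Fin n → ZMod 2 =>
        hammingNorm y = w ∧ hammingDist x y ≤ 2 * h + 1)) := by
    intro y hy
    rw [Finset.mem_filter] at hy
    obtain ⟨x, hxC, hxd⟩ := hcover y hy.2
    exact Finset.mem_biUnion.2 ⟨x, hxC, Finset.mem_filter.2 ⟨Finset.mem_univ _, hy.2, hxd⟩⟩
  have hcount : n.choose w ≤ C.card * V := by
    calc n.choose w
        = (Finset.univ.filter (fun y : Fin n → ZMod 2 => hammingNorm y = w)).card :=
          (GV13.card_weight w).symm
      _ ≤ (C.biUnion (fun x => Finset.univ.filter (fun y : Fin n → ZMod 2 =>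
            hammingNorm y = w ∧ hammingDist x y ≤ 2 * h + 1))).card :=
          Finset.card_le_card hsub
      _ ≤ ∑ x ∈ C, (Finset.univ.filter (fun y : Fin n → ZMod 2 =>
            hammingNorm y = w ∧ hammingDist x y ≤ 2 * h + 1)).card :=
          Finset.card_biUnion_le
      _ ≤ ∑ _x ∈ C, V := by
          apply Finset.sum_le_sum
          intro x hx
          exact GV13.ball_card w h hw x (hCP.1 x hx)
      _ = C.card * V := by rw [Finset.sum_const, smul_eq_mul]
  have hAw : C.card ≤ Aw n (2 * h + 2) w := by
    apply le_csSup
    · refine ⟨Fintype.card (Fin n → ZMod 2), ?_⟩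
      rintro m ⟨D, rfl, -, -⟩
      exact Finset.card_le_univ D
    · exact ⟨C, rfl, hCP.1, hCP.2⟩
  rw [div_le_iff₀ (by exact_mod_cast hVpos)]
  have : (n.choose w : ℝ) ≤ (C.card : ℝ) * V := by exact_mod_cast hcount
  calc (n.choose w : ℝ) ≤ (C.card : ℝ) * V := this
    _ ≤ (Aw n (2 * h + 2) w : ℝ) * V := by
        apply mul_le_mul_of_nonneg_right _ (by positivity)
        exact_mod_cast hAw
end
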